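/- Let x = (x₁,x₂,x₃,x₄) ∈ ℤ⁴ with gcd(x₁,x₂,x₃,x₄) = 1, x₂x₃x₄ + x₁x₃x₄ + x₁x₂x₄ + x₁x₂x₃ = 0, x₁x₂x₃x₄ ≠ 0 and xᵢ + xⱼ ≠ 0 for all i ≠ j. Then there exist ε ∈ {−1,1}, non-zero integers y₁,y₂,y₃,y₄ and positive integers z_{ij} (for 1 ≤ i < j ≤ 4, with z_{ij} = z_{ji}) such that: εx₁ = z₁₂z₁₃z₁₄y₂y₃y₄, εx₂ = z₁₂z₂₃z₂₄y₁y₃y₄, εx₃ = z₁₃z₂₃z₃₄y₁y₂y₄, εx₄ = z₁₄z₂₄z₃₄y₁y₂y₃; gcd(yᵢ, yⱼ) = 1 for all i ≠ j; gcd(yᵢ, z_{ij}) = 1 for all i ≠ j; gcd(z_{ab}, z_{cd}) = 1 for all distinct pairs {a,b} ≠ {c,d}; z₂₃z₂₄z₃₄y₁ + z₁₃z₁₄z₃₄y₂ + z₁₂z₁₄z₂₄y₃ + z₁₂z₁₃z₂₃y₄ = 0; and none of z₂₃z₂₄z₃₄y₁ + z₁₃z₁₄z₃₄y₂, z₂₃z₂₄z₃₄y₁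 + z₁₂z₁₄z₂₄y₃, z₂₃z₂₄z₃₄y₁ + z₁₂z₁₃z₂₃y₄ vanishes. Conversely, if non-zero integers yᵢ and positive integers z_{ij} satisfy all of the above coprimality conditions, the linear equation, and the three non-vanishing conditions, then x₁ = z₁₂z₁₃z₁₄y₂y₃y₄, x₂ = z₁₂z₂₃z₂₄y₁y₃y₄, x₃ = z₁₃z₂₃z₃₄y₁y₂y₄, x₄ = z₁₄z₂₄z₃₄y₁y₂y₃ gives x ∈ ℤ⁴ with gcd(x₁,x₂,x₃,x₄) = 1, satisfying x₂x₃x₄ + x₁x₃x₄ + x₁x₂x₄ + x₁x₂x₃ = 0, x₁x₂x₃x₄ ≠ 0 and xᵢ + xⱼ ≠ 0 for all i ≠ j. -/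

import Mathlib

set_option maxHeartbeats 1000000


/-- The conditions on a primitive integral point `x` of `U₀`: primitivity, the equation of
Cayley's cubic surface, and avoiding the 9 lines. -/
def CayleyPoint (x : Fin 4 → ℤ) : Prop :=
  Int.gcd (Int.gcd (x 0) (x 1)) (Int.gcd (x 2) (x 3)) = 1 ∧
  x 1 * x 2 * x 3 + x 0 * x 2 * x 3 + x 0 * x 1 * x 3 + x 0 * x 1 * x 2 = 0 ∧
  x 0 * x 1 * x 2 * x 3 ≠ 0 ∧
  (∀ i j, i ≠ j → x i + x j ≠ 0)

/-- The torsor conditions on the variables `y i` (indices `0,…,3` for `y₁,…,y₄`) and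
`z i j` (for `i ≠ j`, with `z i j = z j i`, representing `z_{(i+1)(j+1)}`). -/
def TorsorConds (y : Fin 4 → ℤ) (z : Fin 4 → Fin 4 → ℕ) : Prop :=
  (∀ i, y i ≠ 0) ∧
  (∀ i j, i ≠ j → 0 < z i j) ∧
  (∀ i j, z i j = z j i) ∧
  (∀ i j, i ≠ j → Int.gcd (y i) (y j) = 1) ∧
  (∀ i j, i ≠ j → Int.gcd (y i) ((z i j : ℤ)) = 1) ∧
  (∀ a b c d, a ≠ b → c ≠ d → ({a, b} : Finset (Fin 4)) ≠ ({c, d} : Finset (Fin 4)) →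
    Nat.Coprime (z a b) (z c d)) ∧
  ((z 1 2 * z 1 3 * z 2 3 : ℤ) * y 0 + (z 0 2 * z 0 3 * z 2 3 : ℤ) * y 1 +
    (z 0 1 * z 0 3 * z 1 3 : ℤ) * y 2 + (z 0 1 * z 0 2 * z 1 2 : ℤ) * y 3 = 0) ∧
  ((z 1 2 * z 1 3 * z 2 3 : ℤ) * y 0 + (z 0 2 * z 0 3 * z 2 3 : ℤ) * y 1 ≠ 0) ∧
  ((z 1 2 * z 1 3 * z 2 3 : ℤ) * y 0 + (z 0 1 * z 0 3 * z 1 3 : ℤ) * y 2 ≠ 0) ∧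
  ((z 1 2 * z 1 3 * z 2 3 : ℤ) * y 0 + (z 0 1 * z 0 2 * z 1 2 : ℤ) * y 3 ≠ 0)

/-- The point of the surface built from torsor variables:
`x₁ = z₁₂z₁₃z₁₄y₂y₃y₄`, `x₂ = z₁₂z₂₃z₂₄y₁y₃y₄`, `x₃ = z₁₃z₂₃z₃₄y₁y₂y₄`,
`x₄ = z₁₄z₂₄z₃₄y₁y₂y₃`. -/
def torsorPoint (y : Fin 4 → ℤ) (z : Fin 4 → Fin 4 → ℕ) : Fin 4 → ℤ :=
  ![(z 0 1 * z 0 2 * z 0 3 : ℤ) * (y 1 * y 2 * y 3),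
    (z 0 1 * z 1 2 * z 1 3 : ℤ) * (y 0 * y 2 * y 3),
    (z 0 2 * z 1 2 * z 2 3 : ℤ) * (y 0 * y 1 * y 3),
    (z 0 3 * z 1 3 * z 2 3 : ℤ) * (y 0 * y 1 * y 2)]


lemma prime_dvd_gcd_false {p m n : ℕ} (pp : p.Prime) (h : Nat.gcd m n = 1)
    (h1 : p ∣ m) (h2 : p ∣ n) : False := by
  have := Nat.dvd_gcd h1 h2
  rw [h] at this
  exact pp.ne_one (Nat.dvd_one.mp this)

lemma coprime_of_prime {m n : ℕ} (h : ∀ p, p.Prime → p ∣ m → p ∣ n → False) :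
    Nat.Coprime m n := by
  by_contra hc
  obtain ⟨p, pp, hd⟩ := Nat.exists_prime_and_dvd hc
  exact h p pp (hd.trans (Nat.gcd_dvd_left _ _)) (hd.trans (Nat.gcd_dvd_right _ _))

lemma aux_max {p : ℕ} (pp : p.Prime) {b c d e : ℤ} (hc : c ≠ 0) (hd : d ≠ 0) (he : e ≠ 0)
    (heq : c*d*e + b*d*e + b*c*e + b*c*d = 0)
    (h1 : c.natAbs.factorization p < b.natAbs.factorization p)
    (h2 : d.natAbs.factorization p < b.natAbs.factorization p)
    (h3 : e.natAbs.factorization p < b.natAbs.factorization p) : False := by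
  have hb : b ≠ 0 := by rintro rfl; simp at h1
  set N := c.natAbs.factorization p + d.natAbs.factorization p + e.natAbs.factorization p with hN
  have key : ∀ u v w : ℤ, u ≠ 0 → v ≠ 0 → w ≠ 0 →
      N + 1 ≤ u.natAbs.factorization p + v.natAbs.factorization p + w.natAbs.factorization p →
      (p:ℤ)^(N+1) ∣ u*v*w := by
    intro u v w hu hv hw hle
    have habs : (u*v*w).natAbs = u.natAbs * v.natAbs * w.natAbs := by
      simp [Int.natAbs_mul]
    have hnz : (u*v*w).natAbs ≠ 0 := by
      simp [habs, Int.natAbs_ne_zero, hu, hv, hw]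
    have : p^(N+1) ∣ (u*v*w).natAbs := by
      rw [pp.pow_dvd_iff_le_factorization hnz, habs,
        Nat.factorization_mul (by simp [Int.natAbs_ne_zero, hu, hv]) (by simp [Int.natAbs_ne_zero, hw]),
        Nat.factorization_mul (by simp [Int.natAbs_ne_zero, hu]) (by simp [Int.natAbs_ne_zero, hv])]
      simpa using hle
    have := Int.natCast_dvd.mpr this
    simpa using this
  have d1 := key b d e hb hd he (by omega)
  have d2 := key b c e hb hc he (by omega)
  have d3 := key b c d hb hc hd (by omega)
  have dcde : (p:ℤ)^(N+1) ∣ c*d*e := by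
    have hrw : c*d*e = -(b*d*e) - b*c*e - b*c*d := by linarith
    rw [hrw]
    exact dvd_sub (dvd_sub (dvd_neg.mpr d1) d2) d3
  have hnz : (c*d*e).natAbs ≠ 0 := by simp [Int.natAbs_ne_zero, hc, hd, he]
  have : N + 1 ≤ (c*d*e).natAbs.factorization p := by
    rw [← pp.pow_dvd_iff_le_factorization hnz, ← Int.natCast_dvd]
    simpa using dcde
  rw [show (c*d*e).natAbs = c.natAbs*d.natAbs*e.natAbs by simp [Int.natAbs_mul],
    Nat.factorization_mul (by simp [Int.natAbs_ne_zero, hc, hd]) (by simp [Int.natAbs_ne_zero, he]),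
    Nat.factorization_mul (by simp [Int.natAbs_ne_zero, hc]) (by simp [Int.natAbs_ne_zero, hd])] at this
  simp [Finsupp.add_apply] at this
  omega


lemma val_sum0 (a0 a1 a2 a3 : ℕ)
    (hmin : a0 = 0 ∨ a1 = 0 ∨ a2 = 0 ∨ a3 = 0)
    (hmax : (a0 = a1 ∧ a2 ≤ a0 ∧ a3 ≤ a0) ∨ (a0 = a2 ∧ a1 ≤ a0 ∧ a3 ≤ a0) ∨
      (a0 = a3 ∧ a1 ≤ a0 ∧ a2 ≤ a0) ∨ (a1 = a2 ∧ a0 ≤ a1 ∧ a3 ≤ a1) ∨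
      (a1 = a3 ∧ a0 ≤ a1 ∧ a2 ≤ a1) ∨ (a2 = a3 ∧ a0 ≤ a2 ∧ a1 ≤ a2)) :
    a0 = (min a0 a1 - (min (min a0 a1) a3 + min (min a0 a1) a2)) + (min a0 a2 - (min (min a0 a2) a3 + min (min a0 a1) a2)) + (min a0 a3 - (min (min a0 a2) a3 + min (min a0 a1) a3)) + (min (min a0 a2) a3 + min (min a0 a1) a3 + min (min a0 a1) a2) := by
  rcases hmin with h0|h0|h0|h0 <;>
  rcases hmax with ⟨h,h1,h2⟩|⟨h,h1,h2⟩|⟨h,h1,h2⟩|⟨h,h1,h2⟩|⟨h,h1,h2⟩|⟨h,h1,h2⟩ <;> omega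

lemma val_sum1 (a0 a1 a2 a3 : ℕ)
    (hmin : a0 = 0 ∨ a1 = 0 ∨ a2 = 0 ∨ a3 = 0)
    (hmax : (a0 = a1 ∧ a2 ≤ a0 ∧ a3 ≤ a0) ∨ (a0 = a2 ∧ a1 ≤ a0 ∧ a3 ≤ a0) ∨
      (a0 = a3 ∧ a1 ≤ a0 ∧ a2 ≤ a0) ∨ (a1 = a2 ∧ a0 ≤ a1 ∧ a3 ≤ a1) ∨
      (a1 = a3 ∧ a0 ≤ a1 ∧ a2 ≤ a1) ∨ (a2 = a3 ∧ a0 ≤ a2 ∧ a1 ≤ a2)) :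
    a1 = (min a0 a1 - (min (min a0 a1) a3 + min (min a0 a1) a2)) + (min a1 a2 - (min (min a1 a2) a3 + min (min a0 a1) a2)) + (min a1 a3 - (min (min a1 a2) a3 + min (min a0 a1) a3)) + (min (min a1 a2) a3 + min (min a0 a1) a3 + min (min a0 a1) a2) := by
  rcases hmin with h0|h0|h0|h0 <;>
  rcases hmax with ⟨h,h1,h2⟩|⟨h,h1,h2⟩|⟨h,h1,h2⟩|⟨h,h1,h2⟩|⟨h,h1,h2⟩|⟨h,h1,h2⟩ <;> omega

lemma val_sum2 (a0 a1 a2 a3 : ℕ)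
    (hmin : a0 = 0 ∨ a1 = 0 ∨ a2 = 0 ∨ a3 = 0)
    (hmax : (a0 = a1 ∧ a2 ≤ a0 ∧ a3 ≤ a0) ∨ (a0 = a2 ∧ a1 ≤ a0 ∧ a3 ≤ a0) ∨
      (a0 = a3 ∧ a1 ≤ a0 ∧ a2 ≤ a0) ∨ (a1 = a2 ∧ a0 ≤ a1 ∧ a3 ≤ a1) ∨
      (a1 = a3 ∧ a0 ≤ a1 ∧ a2 ≤ a1) ∨ (a2 = a3 ∧ a0 ≤ a2 ∧ a1 ≤ a2)) :
    a2 = (min a0 a2 - (min (min a0 a2) a3 + min (min a0 a1) a2)) + (min a1 a2 - (min (min a1 a2) a3 + min (min a0 a1) a2)) + (min a2 a3 - (min (min a1 a2) a3 + min (min a0 a2) a3)) + (min (min a1 a2) a3 + min (min a0 a2) a3 + min (min a0 a1) a2) := by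
  rcases hmin with h0|h0|h0|h0 <;>
  rcases hmax with ⟨h,h1,h2⟩|⟨h,h1,h2⟩|⟨h,h1,h2⟩|⟨h,h1,h2⟩|⟨h,h1,h2⟩|⟨h,h1,h2⟩ <;> omega

lemma val_sum3 (a0 a1 a2 a3 : ℕ)
    (hmin : a0 = 0 ∨ a1 = 0 ∨ a2 = 0 ∨ a3 = 0)
    (hmax : (a0 = a1 ∧ a2 ≤ a0 ∧ a3 ≤ a0) ∨ (a0 = a2 ∧ a1 ≤ a0 ∧ a3 ≤ a0) ∨
      (a0 = a3 ∧ a1 ≤ a0 ∧ a2 ≤ a0) ∨ (a1 = a2 ∧ a0 ≤ a1 ∧ a3 ≤ a1) ∨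
      (a1 = a3 ∧ a0 ≤ a1 ∧ a2 ≤ a1) ∨ (a2 = a3 ∧ a0 ≤ a2 ∧ a1 ≤ a2)) :
    a3 = (min a0 a3 - (min (min a0 a2) a3 + min (min a0 a1) a3)) + (min a1 a3 - (min (min a1 a2) a3 + min (min a0 a1) a3)) + (min a2 a3 - (min (min a1 a2) a3 + min (min a0 a2) a3)) + (min (min a1 a2) a3 + min (min a0 a2) a3 + min (min a0 a1) a3) := by
  rcases hmin with h0|h0|h0|h0 <;>
  rcases hmax with ⟨h,h1,h2⟩|⟨h,h1,h2⟩|⟨h,h1,h2⟩|⟨h,h1,h2⟩|⟨h,h1,h2⟩|⟨h,h1,h2⟩ <;> omega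

lemma val_pair_01_02 (a0 a1 a2 a3 : ℕ)
    (hmin : a0 = 0 ∨ a1 = 0 ∨ a2 = 0 ∨ a3 = 0)
    (hmax : (a0 = a1 ∧ a2 ≤ a0 ∧ a3 ≤ a0) ∨ (a0 = a2 ∧ a1 ≤ a0 ∧ a3 ≤ a0) ∨
      (a0 = a3 ∧ a1 ≤ a0 ∧ a2 ≤ a0) ∨ (a1 = a2 ∧ a0 ≤ a1 ∧ a3 ≤ a1) ∨
      (a1 = a3 ∧ a0 ≤ a1 ∧ a2 ≤ a1) ∨ (a2 = a3 ∧ a0 ≤ a2 ∧ a1 ≤ a2)) :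
    (min a0 a1 - (min (min a0 a1) a3 + min (min a0 a1) a2) = 0) ∨ (min a0 a2 - (min (min a0 a2) a3 + min (min a0 a1) a2) = 0) := by
  rcases hmin with h0|h0|h0|h0 <;>
  rcases hmax with ⟨h,h1,h2⟩|⟨h,h1,h2⟩|⟨h,h1,h2⟩|⟨h,h1,h2⟩|⟨h,h1,h2⟩|⟨h,h1,h2⟩ <;> omega

lemma val_pair_01_03 (a0 a1 a2 a3 : ℕ)
    (hmin : a0 = 0 ∨ a1 = 0 ∨ a2 = 0 ∨ a3 = 0)
    (hmax : (a0 = a1 ∧ a2 ≤ a0 ∧ a3 ≤ a0) ∨ (a0 = a2 ∧ a1 ≤ a0 ∧ a3 ≤ a0) ∨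
      (a0 = a3 ∧ a1 ≤ a0 ∧ a2 ≤ a0) ∨ (a1 = a2 ∧ a0 ≤ a1 ∧ a3 ≤ a1) ∨
      (a1 = a3 ∧ a0 ≤ a1 ∧ a2 ≤ a1) ∨ (a2 = a3 ∧ a0 ≤ a2 ∧ a1 ≤ a2)) :
    (min a0 a1 - (min (min a0 a1) a3 + min (min a0 a1) a2) = 0) ∨ (min a0 a3 - (min (min a0 a2) a3 + min (min a0 a1) a3) = 0) := by
  rcases hmin with h0|h0|h0|h0 <;>
  rcases hmax with ⟨h,h1,h2⟩|⟨h,h1,h2⟩|⟨h,h1,h2⟩|⟨h,h1,h2⟩|⟨h,h1,h2⟩|⟨h,h1,h2⟩ <;> omega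

lemma val_pair_01_12 (a0 a1 a2 a3 : ℕ)
    (hmin : a0 = 0 ∨ a1 = 0 ∨ a2 = 0 ∨ a3 = 0)
    (hmax : (a0 = a1 ∧ a2 ≤ a0 ∧ a3 ≤ a0) ∨ (a0 = a2 ∧ a1 ≤ a0 ∧ a3 ≤ a0) ∨
      (a0 = a3 ∧ a1 ≤ a0 ∧ a2 ≤ a0) ∨ (a1 = a2 ∧ a0 ≤ a1 ∧ a3 ≤ a1) ∨
      (a1 = a3 ∧ a0 ≤ a1 ∧ a2 ≤ a1) ∨ (a2 = a3 ∧ a0 ≤ a2 ∧ a1 ≤ a2)) :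
    (min a0 a1 - (min (min a0 a1) a3 + min (min a0 a1) a2) = 0) ∨ (min a1 a2 - (min (min a1 a2) a3 + min (min a0 a1) a2) = 0) := by
  rcases hmin with h0|h0|h0|h0 <;>
  rcases hmax with ⟨h,h1,h2⟩|⟨h,h1,h2⟩|⟨h,h1,h2⟩|⟨h,h1,h2⟩|⟨h,h1,h2⟩|⟨h,h1,h2⟩ <;> omega

lemma val_pair_01_13 (a0 a1 a2 a3 : ℕ)
    (hmin : a0 = 0 ∨ a1 = 0 ∨ a2 = 0 ∨ a3 = 0)
    (hmax : (a0 = a1 ∧ a2 ≤ a0 ∧ a3 ≤ a0) ∨ (a0 = a2 ∧ a1 ≤ a0 ∧ a3 ≤ a0) ∨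
      (a0 = a3 ∧ a1 ≤ a0 ∧ a2 ≤ a0) ∨ (a1 = a2 ∧ a0 ≤ a1 ∧ a3 ≤ a1) ∨
      (a1 = a3 ∧ a0 ≤ a1 ∧ a2 ≤ a1) ∨ (a2 = a3 ∧ a0 ≤ a2 ∧ a1 ≤ a2)) :
    (min a0 a1 - (min (min a0 a1) a3 + min (min a0 a1) a2) = 0) ∨ (min a1 a3 - (min (min a1 a2) a3 + min (min a0 a1) a3) = 0) := by
  rcases hmin with h0|h0|h0|h0 <;>
  rcases hmax with ⟨h,h1,h2⟩|⟨h,h1,h2⟩|⟨h,h1,h2⟩|⟨h,h1,h2⟩|⟨h,h1,h2⟩|⟨h,h1,h2⟩ <;> omega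

lemma val_pair_02_03 (a0 a1 a2 a3 : ℕ)
    (hmin : a0 = 0 ∨ a1 = 0 ∨ a2 = 0 ∨ a3 = 0)
    (hmax : (a0 = a1 ∧ a2 ≤ a0 ∧ a3 ≤ a0) ∨ (a0 = a2 ∧ a1 ≤ a0 ∧ a3 ≤ a0) ∨
      (a0 = a3 ∧ a1 ≤ a0 ∧ a2 ≤ a0) ∨ (a1 = a2 ∧ a0 ≤ a1 ∧ a3 ≤ a1) ∨
      (a1 = a3 ∧ a0 ≤ a1 ∧ a2 ≤ a1) ∨ (a2 = a3 ∧ a0 ≤ a2 ∧ a1 ≤ a2)) :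
    (min a0 a2 - (min (min a0 a2) a3 + min (min a0 a1) a2) = 0) ∨ (min a0 a3 - (min (min a0 a2) a3 + min (min a0 a1) a3) = 0) := by
  rcases hmin with h0|h0|h0|h0 <;>
  rcases hmax with ⟨h,h1,h2⟩|⟨h,h1,h2⟩|⟨h,h1,h2⟩|⟨h,h1,h2⟩|⟨h,h1,h2⟩|⟨h,h1,h2⟩ <;> omega

lemma val_pair_02_12 (a0 a1 a2 a3 : ℕ)
    (hmin : a0 = 0 ∨ a1 = 0 ∨ a2 = 0 ∨ a3 = 0)
    (hmax : (a0 = a1 ∧ a2 ≤ a0 ∧ a3 ≤ a0) ∨ (a0 = a2 ∧ a1 ≤ a0 ∧ a3 ≤ a0) ∨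
      (a0 = a3 ∧ a1 ≤ a0 ∧ a2 ≤ a0) ∨ (a1 = a2 ∧ a0 ≤ a1 ∧ a3 ≤ a1) ∨
      (a1 = a3 ∧ a0 ≤ a1 ∧ a2 ≤ a1) ∨ (a2 = a3 ∧ a0 ≤ a2 ∧ a1 ≤ a2)) :
    (min a0 a2 - (min (min a0 a2) a3 + min (min a0 a1) a2) = 0) ∨ (min a1 a2 - (min (min a1 a2) a3 + min (min a0 a1) a2) = 0) := by
  rcases hmin with h0|h0|h0|h0 <;>
  rcases hmax with ⟨h,h1,h2⟩|⟨h,h1,h2⟩|⟨h,h1,h2⟩|⟨h,h1,h2⟩|⟨h,h1,h2⟩|⟨h,h1,h2⟩ <;> omega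

lemma val_pair_02_23 (a0 a1 a2 a3 : ℕ)
    (hmin : a0 = 0 ∨ a1 = 0 ∨ a2 = 0 ∨ a3 = 0)
    (hmax : (a0 = a1 ∧ a2 ≤ a0 ∧ a3 ≤ a0) ∨ (a0 = a2 ∧ a1 ≤ a0 ∧ a3 ≤ a0) ∨
      (a0 = a3 ∧ a1 ≤ a0 ∧ a2 ≤ a0) ∨ (a1 = a2 ∧ a0 ≤ a1 ∧ a3 ≤ a1) ∨
      (a1 = a3 ∧ a0 ≤ a1 ∧ a2 ≤ a1) ∨ (a2 = a3 ∧ a0 ≤ a2 ∧ a1 ≤ a2)) :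
    (min a0 a2 - (min (min a0 a2) a3 + min (min a0 a1) a2) = 0) ∨ (min a2 a3 - (min (min a1 a2) a3 + min (min a0 a2) a3) = 0) := by
  rcases hmin with h0|h0|h0|h0 <;>
  rcases hmax with ⟨h,h1,h2⟩|⟨h,h1,h2⟩|⟨h,h1,h2⟩|⟨h,h1,h2⟩|⟨h,h1,h2⟩|⟨h,h1,h2⟩ <;> omega

lemma val_pair_03_13 (a0 a1 a2 a3 : ℕ)
    (hmin : a0 = 0 ∨ a1 = 0 ∨ a2 = 0 ∨ a3 = 0)
    (hmax : (a0 = a1 ∧ a2 ≤ a0 ∧ a3 ≤ a0) ∨ (a0 = a2 ∧ a1 ≤ a0 ∧ a3 ≤ a0) ∨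
      (a0 = a3 ∧ a1 ≤ a0 ∧ a2 ≤ a0) ∨ (a1 = a2 ∧ a0 ≤ a1 ∧ a3 ≤ a1) ∨
      (a1 = a3 ∧ a0 ≤ a1 ∧ a2 ≤ a1) ∨ (a2 = a3 ∧ a0 ≤ a2 ∧ a1 ≤ a2)) :
    (min a0 a3 - (min (min a0 a2) a3 + min (min a0 a1) a3) = 0) ∨ (min a1 a3 - (min (min a1 a2) a3 + min (min a0 a1) a3) = 0) := by
  rcases hmin with h0|h0|h0|h0 <;>
  rcases hmax with ⟨h,h1,h2⟩|⟨h,h1,h2⟩|⟨h,h1,h2⟩|⟨h,h1,h2⟩|⟨h,h1,h2⟩|⟨h,h1,h2⟩ <;> omega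

lemma val_pair_03_23 (a0 a1 a2 a3 : ℕ)
    (hmin : a0 = 0 ∨ a1 = 0 ∨ a2 = 0 ∨ a3 = 0)
    (hmax : (a0 = a1 ∧ a2 ≤ a0 ∧ a3 ≤ a0) ∨ (a0 = a2 ∧ a1 ≤ a0 ∧ a3 ≤ a0) ∨
      (a0 = a3 ∧ a1 ≤ a0 ∧ a2 ≤ a0) ∨ (a1 = a2 ∧ a0 ≤ a1 ∧ a3 ≤ a1) ∨
      (a1 = a3 ∧ a0 ≤ a1 ∧ a2 ≤ a1) ∨ (a2 = a3 ∧ a0 ≤ a2 ∧ a1 ≤ a2)) :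
    (min a0 a3 - (min (min a0 a2) a3 + min (min a0 a1) a3) = 0) ∨ (min a2 a3 - (min (min a1 a2) a3 + min (min a0 a2) a3) = 0) := by
  rcases hmin with h0|h0|h0|h0 <;>
  rcases hmax with ⟨h,h1,h2⟩|⟨h,h1,h2⟩|⟨h,h1,h2⟩|⟨h,h1,h2⟩|⟨h,h1,h2⟩|⟨h,h1,h2⟩ <;> omega

lemma val_pair_12_13 (a0 a1 a2 a3 : ℕ)
    (hmin : a0 = 0 ∨ a1 = 0 ∨ a2 = 0 ∨ a3 = 0)
    (hmax : (a0 = a1 ∧ a2 ≤ a0 ∧ a3 ≤ a0) ∨ (a0 = a2 ∧ a1 ≤ a0 ∧ a3 ≤ a0) ∨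
      (a0 = a3 ∧ a1 ≤ a0 ∧ a2 ≤ a0) ∨ (a1 = a2 ∧ a0 ≤ a1 ∧ a3 ≤ a1) ∨
      (a1 = a3 ∧ a0 ≤ a1 ∧ a2 ≤ a1) ∨ (a2 = a3 ∧ a0 ≤ a2 ∧ a1 ≤ a2)) :
    (min a1 a2 - (min (min a1 a2) a3 + min (min a0 a1) a2) = 0) ∨ (min a1 a3 - (min (min a1 a2) a3 + min (min a0 a1) a3) = 0) := by
  rcases hmin with h0|h0|h0|h0 <;>
  rcases hmax with ⟨h,h1,h2⟩|⟨h,h1,h2⟩|⟨h,h1,h2⟩|⟨h,h1,h2⟩|⟨h,h1,h2⟩|⟨h,h1,h2⟩ <;> omega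

lemma val_pair_12_23 (a0 a1 a2 a3 : ℕ)
    (hmin : a0 = 0 ∨ a1 = 0 ∨ a2 = 0 ∨ a3 = 0)
    (hmax : (a0 = a1 ∧ a2 ≤ a0 ∧ a3 ≤ a0) ∨ (a0 = a2 ∧ a1 ≤ a0 ∧ a3 ≤ a0) ∨
      (a0 = a3 ∧ a1 ≤ a0 ∧ a2 ≤ a0) ∨ (a1 = a2 ∧ a0 ≤ a1 ∧ a3 ≤ a1) ∨
      (a1 = a3 ∧ a0 ≤ a1 ∧ a2 ≤ a1) ∨ (a2 = a3 ∧ a0 ≤ a2 ∧ a1 ≤ a2)) :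
    (min a1 a2 - (min (min a1 a2) a3 + min (min a0 a1) a2) = 0) ∨ (min a2 a3 - (min (min a1 a2) a3 + min (min a0 a2) a3) = 0) := by
  rcases hmin with h0|h0|h0|h0 <;>
  rcases hmax with ⟨h,h1,h2⟩|⟨h,h1,h2⟩|⟨h,h1,h2⟩|⟨h,h1,h2⟩|⟨h,h1,h2⟩|⟨h,h1,h2⟩ <;> omega

lemma val_pair_13_23 (a0 a1 a2 a3 : ℕ)
    (hmin : a0 = 0 ∨ a1 = 0 ∨ a2 = 0 ∨ a3 = 0)
    (hmax : (a0 = a1 ∧ a2 ≤ a0 ∧ a3 ≤ a0) ∨ (a0 = a2 ∧ a1 ≤ a0 ∧ a3 ≤ a0) ∨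
      (a0 = a3 ∧ a1 ≤ a0 ∧ a2 ≤ a0) ∨ (a1 = a2 ∧ a0 ≤ a1 ∧ a3 ≤ a1) ∨
      (a1 = a3 ∧ a0 ≤ a1 ∧ a2 ≤ a1) ∨ (a2 = a3 ∧ a0 ≤ a2 ∧ a1 ≤ a2)) :
    (min a1 a3 - (min (min a1 a2) a3 + min (min a0 a1) a3) = 0) ∨ (min a2 a3 - (min (min a1 a2) a3 + min (min a0 a2) a3) = 0) := by
  rcases hmin with h0|h0|h0|h0 <;>
  rcases hmax with ⟨h,h1,h2⟩|⟨h,h1,h2⟩|⟨h,h1,h2⟩|⟨h,h1,h2⟩|⟨h,h1,h2⟩|⟨h,h1,h2⟩ <;> omega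

lemma torsor_forward (x : Fin 4 → ℤ) (hC : CayleyPoint x) :
    ∃ ε : ℤ, (ε = 1 ∨ ε = -1) ∧ ∃ y : Fin 4 → ℤ, ∃ z : Fin 4 → Fin 4 → ℕ,
      TorsorConds y z ∧ ∀ i, ε * x i = torsorPoint y z i := by
  obtain ⟨hg, heq, hprod, hlines⟩ := hC
  have hx0 : x 0 ≠ 0 := fun h => hprod (by rw [h]; ring)
  have hx1 : x 1 ≠ 0 := fun h => hprod (by rw [h]; ring)
  have hx2 : x 2 ≠ 0 := fun h => hprod (by rw [h]; ring)
  have hx3 : x 3 ≠ 0 := fun h => hprod (by rw [h]; ring)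
  obtain ⟨n0, hn0d⟩ : ∃ n, n = (x 0).natAbs := ⟨_, rfl⟩
  obtain ⟨n1, hn1d⟩ : ∃ n, n = (x 1).natAbs := ⟨_, rfl⟩
  obtain ⟨n2, hn2d⟩ : ∃ n, n = (x 2).natAbs := ⟨_, rfl⟩
  obtain ⟨n3, hn3d⟩ : ∃ n, n = (x 3).natAbs := ⟨_, rfl⟩
  have hn0z : n0 ≠ 0 := by rw [hn0d]; simpa [Int.natAbs_ne_zero] using hx0
  have hn1z : n1 ≠ 0 := by rw [hn1d]; simpa [Int.natAbs_ne_zero] using hx1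
  have hn2z : n2 ≠ 0 := by rw [hn2d]; simpa [Int.natAbs_ne_zero] using hx2
  have hn3z : n3 ≠ 0 := by rw [hn3d]; simpa [Int.natAbs_ne_zero] using hx3
  have hall : ∀ p : ℕ, p.Prime → p ∣ n0 → p ∣ n1 → p ∣ n2 → p ∣ n3 → False := by
    intro p pp h0 h1 h2 h3
    rw [hn0d] at h0; rw [hn1d] at h1; rw [hn2d] at h2; rw [hn3d] at h3
    have : p ∣ Int.gcd (↑(Int.gcd (x 0) (x 1))) (↑(Int.gcd (x 2) (x 3))) :=
      Nat.dvd_gcd (Nat.dvd_gcd h0 h1) (Nat.dvd_gcd h2 h3)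
    rw [hg] at this
    exact pp.ne_one (Nat.dvd_one.mp this)
  have hminf : ∀ p : ℕ, p.Prime → n0.factorization p = 0 ∨ n1.factorization p = 0 ∨
      n2.factorization p = 0 ∨ n3.factorization p = 0 := by
    intro p pp
    by_contra hcon
    push_neg at hcon
    exact hall p pp (Nat.dvd_of_factorization_pos hcon.1)
      (Nat.dvd_of_factorization_pos hcon.2.1)
      (Nat.dvd_of_factorization_pos hcon.2.2.1)
      (Nat.dvd_of_factorization_pos hcon.2.2.2)
  have hmaxf : ∀ p : ℕ, p.Prime →
      (n0.factorization p = n1.factorization p ∧ n2.factorization p ≤ n0.factorization p ∧ n3.factorization p ≤ n0.factorization p) ∨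
      (n0.factorization p = n2.factorization p ∧ n1.factorization p ≤ n0.factorization p ∧ n3.factorization p ≤ n0.factorization p) ∨
      (n0.factorization p = n3.factorization p ∧ n1.factorization p ≤ n0.factorization p ∧ n2.factorization p ≤ n0.factorization p) ∨
      (n1.factorization p = n2.factorization p ∧ n0.factorization p ≤ n1.factorization p ∧ n3.factorization p ≤ n1.factorization p) ∨
      (n1.factorization p = n3.factorization p ∧ n0.factorization p ≤ n1.factorization p ∧ n2.factorization p ≤ n1.factorization p) ∨
      (n2.factorization p = n3.factorization p ∧ n0.factorization p ≤ n2.factorization p ∧ n1.factorization p ≤ n2.factorization p) := by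
    intro p pp
    by_contra hcon
    have hbig : (n1.factorization p < n0.factorization p ∧ n2.factorization p < n0.factorization p ∧ n3.factorization p < n0.factorization p) ∨
        (n0.factorization p < n1.factorization p ∧ n2.factorization p < n1.factorization p ∧ n3.factorization p < n1.factorization p) ∨
        (n0.factorization p < n2.factorization p ∧ n1.factorization p < n2.factorization p ∧ n3.factorization p < n2.factorization p) ∨
        (n0.factorization p < n3.factorization p ∧ n1.factorization p < n3.factorization p ∧ n2.factorization p < n3.factorization p) := by
      omega
    rw [hn0d, hn1d, hn2d, hn3d] at hbig
    rcases hbig with ⟨u,v,w⟩|⟨u,v,w⟩|⟨u,v,w⟩|⟨u,v,w⟩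
    · exact aux_max pp hx1 hx2 hx3 heq u v w
    · exact aux_max pp hx0 hx2 hx3 (by linear_combination heq) u v w
    · exact aux_max pp hx0 hx1 hx3 (by linear_combination heq) u v w
    · exact aux_max pp hx0 hx1 hx2 (by linear_combination heq) u v w
  obtain ⟨t0, ht0d⟩ : ∃ t, t = Nat.gcd (Nat.gcd n1 n2) n3 := ⟨_, rfl⟩
  obtain ⟨t1, ht1d⟩ : ∃ t, t = Nat.gcd (Nat.gcd n0 n2) n3 := ⟨_, rfl⟩
  obtain ⟨t2, ht2d⟩ : ∃ t, t = Nat.gcd (Nat.gcd n0 n1) n3 := ⟨_, rfl⟩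
  obtain ⟨t3, ht3d⟩ : ∃ t, t = Nat.gcd (Nat.gcd n0 n1) n2 := ⟨_, rfl⟩
  have ht0z : t0 ≠ 0 := by rw [ht0d]; exact Nat.gcd_ne_zero_right hn3z
  have ht1z : t1 ≠ 0 := by rw [ht1d]; exact Nat.gcd_ne_zero_right hn3z
  have ht2z : t2 ≠ 0 := by rw [ht2d]; exact Nat.gcd_ne_zero_right hn3z
  have ht3z : t3 ≠ 0 := by rw [ht3d]; exact Nat.gcd_ne_zero_right hn2z
  have ht0n1 : t0 ∣ n1 := by rw [ht0d]; exact (Nat.gcd_dvd_left _ _).trans (Nat.gcd_dvd_left _ _)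
  have ht0n2 : t0 ∣ n2 := by rw [ht0d]; exact (Nat.gcd_dvd_left _ _).trans (Nat.gcd_dvd_right _ _)
  have ht0n3 : t0 ∣ n3 := by rw [ht0d]; exact Nat.gcd_dvd_right _ _
  have ht1n0 : t1 ∣ n0 := by rw [ht1d]; exact (Nat.gcd_dvd_left _ _).trans (Nat.gcd_dvd_left _ _)
  have ht1n2 : t1 ∣ n2 := by rw [ht1d]; exact (Nat.gcd_dvd_left _ _).trans (Nat.gcd_dvd_right _ _)
  have ht1n3 : t1 ∣ n3 := by rw [ht1d]; exact Nat.gcd_dvd_right _ _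
  have ht2n0 : t2 ∣ n0 := by rw [ht2d]; exact (Nat.gcd_dvd_left _ _).trans (Nat.gcd_dvd_left _ _)
  have ht2n1 : t2 ∣ n1 := by rw [ht2d]; exact (Nat.gcd_dvd_left _ _).trans (Nat.gcd_dvd_right _ _)
  have ht2n3 : t2 ∣ n3 := by rw [ht2d]; exact Nat.gcd_dvd_right _ _
  have ht3n0 : t3 ∣ n0 := by rw [ht3d]; exact (Nat.gcd_dvd_left _ _).trans (Nat.gcd_dvd_left _ _)
  have ht3n1 : t3 ∣ n1 := by rw [ht3d]; exact (Nat.gcd_dvd_left _ _).trans (Nat.gcd_dvd_right _ _)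
  have ht3n2 : t3 ∣ n2 := by rw [ht3d]; exact Nat.gcd_dvd_right _ _
  have cop_t0_t1 : Nat.Coprime t0 t1 := coprime_of_prime fun p pp h1 h2 =>
    hall p pp (h2.trans ht1n0) (h1.trans ht0n1) (h1.trans ht0n2) (h1.trans ht0n3)
  have cop_t0_t2 : Nat.Coprime t0 t2 := coprime_of_prime fun p pp h1 h2 =>
    hall p pp (h2.trans ht2n0) (h1.trans ht0n1) (h1.trans ht0n2) (h1.trans ht0n3)
  have cop_t0_t3 : Nat.Coprime t0 t3 := coprime_of_prime fun p pp h1 h2 =>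
    hall p pp (h2.trans ht3n0) (h1.trans ht0n1) (h1.trans ht0n2) (h1.trans ht0n3)
  have cop_t1_t2 : Nat.Coprime t1 t2 := coprime_of_prime fun p pp h1 h2 =>
    hall p pp (h1.trans ht1n0) (h2.trans ht2n1) (h1.trans ht1n2) (h1.trans ht1n3)
  have cop_t1_t3 : Nat.Coprime t1 t3 := coprime_of_prime fun p pp h1 h2 =>
    hall p pp (h1.trans ht1n0) (h2.trans ht3n1) (h1.trans ht1n2) (h1.trans ht1n3)
  have cop_t2_t3 : Nat.Coprime t2 t3 := coprime_of_prime fun p pp h1 h2 =>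
    hall p pp (h1.trans ht2n0) (h1.trans ht2n1) (h2.trans ht3n2) (h1.trans ht2n3)
  have cop_t0_n0 : Nat.Coprime t0 n0 := coprime_of_prime fun p pp h1 h2 =>
    hall p pp h2 (h1.trans ht0n1) (h1.trans ht0n2) (h1.trans ht0n3)
  have cop_t1_n1 : Nat.Coprime t1 n1 := coprime_of_prime fun p pp h1 h2 =>
    hall p pp (h1.trans ht1n0) h2 (h1.trans ht1n2) (h1.trans ht1n3)
  have cop_t2_n2 : Nat.Coprime t2 n2 := coprime_of_prime fun p pp h1 h2 =>
    hall p pp (h1.trans ht2n0) (h1.trans ht2n1) h2 (h1.trans ht2n3)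
  have cop_t3_n3 : Nat.Coprime t3 n3 := coprime_of_prime fun p pp h1 h2 =>
    hall p pp (h1.trans ht3n0) (h1.trans ht3n1) (h1.trans ht3n2) h2
  have hdvd01 : t2 * t3 ∣ Nat.gcd n0 n1 :=
    cop_t2_t3.mul_dvd_of_dvd_of_dvd (Nat.dvd_gcd ht2n0 ht2n1) (Nat.dvd_gcd ht3n0 ht3n1)
  have hdvd02 : t1 * t3 ∣ Nat.gcd n0 n2 :=
    cop_t1_t3.mul_dvd_of_dvd_of_dvd (Nat.dvd_gcd ht1n0 ht1n2) (Nat.dvd_gcd ht3n0 ht3n2)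
  have hdvd03 : t1 * t2 ∣ Nat.gcd n0 n3 :=
    cop_t1_t2.mul_dvd_of_dvd_of_dvd (Nat.dvd_gcd ht1n0 ht1n3) (Nat.dvd_gcd ht2n0 ht2n3)
  have hdvd12 : t0 * t3 ∣ Nat.gcd n1 n2 :=
    cop_t0_t3.mul_dvd_of_dvd_of_dvd (Nat.dvd_gcd ht0n1 ht0n2) (Nat.dvd_gcd ht3n1 ht3n2)
  have hdvd13 : t0 * t2 ∣ Nat.gcd n1 n3 :=
    cop_t0_t2.mul_dvd_of_dvd_of_dvd (Nat.dvd_gcd ht0n1 ht0n3) (Nat.dvd_gcd ht2n1 ht2n3)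
  have hdvd23 : t0 * t1 ∣ Nat.gcd n2 n3 :=
    cop_t0_t1.mul_dvd_of_dvd_of_dvd (Nat.dvd_gcd ht0n2 ht0n3) (Nat.dvd_gcd ht1n2 ht1n3)
  obtain ⟨z01, hz01d⟩ : ∃ z, z = Nat.gcd n0 n1 / (t2 * t3) := ⟨_, rfl⟩
  have hz01m : z01 * (t2 * t3) = Nat.gcd n0 n1 := by rw [hz01d]; exact Nat.div_mul_cancel hdvd01
  have hz01z : z01 ≠ 0 := fun h => Nat.gcd_ne_zero_left hn0z (by rw [← hz01m, h, Nat.zero_mul])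
  have hz01g : z01 ∣ Nat.gcd n0 n1 := ⟨_, hz01m.symm⟩
  have hz01n0 : z01 ∣ n0 := hz01g.trans (Nat.gcd_dvd_left _ _)
  have hz01n1 : z01 ∣ n1 := hz01g.trans (Nat.gcd_dvd_right _ _)
  obtain ⟨z02, hz02d⟩ : ∃ z, z = Nat.gcd n0 n2 / (t1 * t3) := ⟨_, rfl⟩
  have hz02m : z02 * (t1 * t3) = Nat.gcd n0 n2 := by rw [hz02d]; exact Nat.div_mul_cancel hdvd02
  have hz02z : z02 ≠ 0 := fun h => Nat.gcd_ne_zero_left hn0z (by rw [← hz02m, h, Nat.zero_mul])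
  have hz02g : z02 ∣ Nat.gcd n0 n2 := ⟨_, hz02m.symm⟩
  have hz02n0 : z02 ∣ n0 := hz02g.trans (Nat.gcd_dvd_left _ _)
  have hz02n2 : z02 ∣ n2 := hz02g.trans (Nat.gcd_dvd_right _ _)
  obtain ⟨z03, hz03d⟩ : ∃ z, z = Nat.gcd n0 n3 / (t1 * t2) := ⟨_, rfl⟩
  have hz03m : z03 * (t1 * t2) = Nat.gcd n0 n3 := by rw [hz03d]; exact Nat.div_mul_cancel hdvd03
  have hz03z : z03 ≠ 0 := fun h => Nat.gcd_ne_zero_left hn0z (by rw [← hz03m, h, Nat.zero_mul])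
  have hz03g : z03 ∣ Nat.gcd n0 n3 := ⟨_, hz03m.symm⟩
  have hz03n0 : z03 ∣ n0 := hz03g.trans (Nat.gcd_dvd_left _ _)
  have hz03n3 : z03 ∣ n3 := hz03g.trans (Nat.gcd_dvd_right _ _)
  obtain ⟨z12, hz12d⟩ : ∃ z, z = Nat.gcd n1 n2 / (t0 * t3) := ⟨_, rfl⟩
  have hz12m : z12 * (t0 * t3) = Nat.gcd n1 n2 := by rw [hz12d]; exact Nat.div_mul_cancel hdvd12
  have hz12z : z12 ≠ 0 := fun h => Nat.gcd_ne_zero_left hn1z (by rw [← hz12m, h, Nat.zero_mul])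
  have hz12g : z12 ∣ Nat.gcd n1 n2 := ⟨_, hz12m.symm⟩
  have hz12n1 : z12 ∣ n1 := hz12g.trans (Nat.gcd_dvd_left _ _)
  have hz12n2 : z12 ∣ n2 := hz12g.trans (Nat.gcd_dvd_right _ _)
  obtain ⟨z13, hz13d⟩ : ∃ z, z = Nat.gcd n1 n3 / (t0 * t2) := ⟨_, rfl⟩
  have hz13m : z13 * (t0 * t2) = Nat.gcd n1 n3 := by rw [hz13d]; exact Nat.div_mul_cancel hdvd13
  have hz13z : z13 ≠ 0 := fun h => Nat.gcd_ne_zero_left hn1z (by rw [← hz13m, h, Nat.zero_mul])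
  have hz13g : z13 ∣ Nat.gcd n1 n3 := ⟨_, hz13m.symm⟩
  have hz13n1 : z13 ∣ n1 := hz13g.trans (Nat.gcd_dvd_left _ _)
  have hz13n3 : z13 ∣ n3 := hz13g.trans (Nat.gcd_dvd_right _ _)
  obtain ⟨z23, hz23d⟩ : ∃ z, z = Nat.gcd n2 n3 / (t0 * t1) := ⟨_, rfl⟩
  have hz23m : z23 * (t0 * t1) = Nat.gcd n2 n3 := by rw [hz23d]; exact Nat.div_mul_cancel hdvd23
  have hz23z : z23 ≠ 0 := fun h => Nat.gcd_ne_zero_left hn2z (by rw [← hz23m, h, Nat.zero_mul])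
  have hz23g : z23 ∣ Nat.gcd n2 n3 := ⟨_, hz23m.symm⟩
  have hz23n2 : z23 ∣ n2 := hz23g.trans (Nat.gcd_dvd_left _ _)
  have hz23n3 : z23 ∣ n3 := hz23g.trans (Nat.gcd_dvd_right _ _)
  have hfact : ∀ p : ℕ, p.Prime →
      z01.factorization p = min (n0.factorization p) (n1.factorization p) - (t2.factorization p + t3.factorization p) ∧
      z02.factorization p = min (n0.factorization p) (n2.factorization p) - (t1.factorization p + t3.factorization p) ∧
      z03.factorization p = min (n0.factorization p) (n3.factorization p) - (t1.factorization p + t2.factorization p) ∧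
      z12.factorization p = min (n1.factorization p) (n2.factorization p) - (t0.factorization p + t3.factorization p) ∧
      z13.factorization p = min (n1.factorization p) (n3.factorization p) - (t0.factorization p + t2.factorization p) ∧
      z23.factorization p = min (n2.factorization p) (n3.factorization p) - (t0.factorization p + t1.factorization p) ∧
      t0.factorization p = min (min (n1.factorization p) (n2.factorization p)) (n3.factorization p) ∧
      t1.factorization p = min (min (n0.factorization p) (n2.factorization p)) (n3.factorization p) ∧
      t2.factorization p = min (min (n0.factorization p) (n1.factorization p)) (n3.factorization p) ∧
      t3.factorization p = min (min (n0.factorization p) (n1.factorization p)) (n2.factorization p) := by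
    intro p pp
    have e01 : z01.factorization p = min (n0.factorization p) (n1.factorization p) - (t2.factorization p + t3.factorization p) := by
      rw [hz01d, Nat.factorization_div hdvd01, Finsupp.tsub_apply,
        Nat.factorization_gcd hn0z hn1z, Finsupp.inf_apply,
        Nat.factorization_mul ht2z ht3z, Finsupp.add_apply]
    have e02 : z02.factorization p = min (n0.factorization p) (n2.factorization p) - (t1.factorization p + t3.factorization p) := by
      rw [hz02d, Nat.factorization_div hdvd02, Finsupp.tsub_apply,
        Nat.factorization_gcd hn0z hn2z, Finsupp.inf_apply,
        Nat.factorization_mul ht1z ht3z, Finsupp.add_apply]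
    have e03 : z03.factorization p = min (n0.factorization p) (n3.factorization p) - (t1.factorization p + t2.factorization p) := by
      rw [hz03d, Nat.factorization_div hdvd03, Finsupp.tsub_apply,
        Nat.factorization_gcd hn0z hn3z, Finsupp.inf_apply,
        Nat.factorization_mul ht1z ht2z, Finsupp.add_apply]
    have e12 : z12.factorization p = min (n1.factorization p) (n2.factorization p) - (t0.factorization p + t3.factorization p) := by
      rw [hz12d, Nat.factorization_div hdvd12, Finsupp.tsub_apply,
        Nat.factorization_gcd hn1z hn2z, Finsupp.inf_apply,
        Nat.factorization_mul ht0z ht3z, Finsupp.add_apply]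
    have e13 : z13.factorization p = min (n1.factorization p) (n3.factorization p) - (t0.factorization p + t2.factorization p) := by
      rw [hz13d, Nat.factorization_div hdvd13, Finsupp.tsub_apply,
        Nat.factorization_gcd hn1z hn3z, Finsupp.inf_apply,
        Nat.factorization_mul ht0z ht2z, Finsupp.add_apply]
    have e23 : z23.factorization p = min (n2.factorization p) (n3.factorization p) - (t0.factorization p + t1.factorization p) := by
      rw [hz23d, Nat.factorization_div hdvd23, Finsupp.tsub_apply,
        Nat.factorization_gcd hn2z hn3z, Finsupp.inf_apply,
        Nat.factorization_mul ht0z ht1z, Finsupp.add_apply]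
    have f0 : t0.factorization p = min (min (n1.factorization p) (n2.factorization p)) (n3.factorization p) := by
      rw [ht0d, Nat.factorization_gcd (Nat.gcd_ne_zero_left hn1z) hn3z, Finsupp.inf_apply,
        Nat.factorization_gcd hn1z hn2z, Finsupp.inf_apply]
    have f1 : t1.factorization p = min (min (n0.factorization p) (n2.factorization p)) (n3.factorization p) := by
      rw [ht1d, Nat.factorization_gcd (Nat.gcd_ne_zero_left hn0z) hn3z, Finsupp.inf_apply,
        Nat.factorization_gcd hn0z hn2z, Finsupp.inf_apply]
    have f2 : t2.factorization p = min (min (n0.factorization p) (n1.factorization p)) (n3.factorization p) := by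
      rw [ht2d, Nat.factorization_gcd (Nat.gcd_ne_zero_left hn0z) hn3z, Finsupp.inf_apply,
        Nat.factorization_gcd hn0z hn1z, Finsupp.inf_apply]
    have f3 : t3.factorization p = min (min (n0.factorization p) (n1.factorization p)) (n2.factorization p) := by
      rw [ht3d, Nat.factorization_gcd (Nat.gcd_ne_zero_left hn0z) hn2z, Finsupp.inf_apply,
        Nat.factorization_gcd hn0z hn1z, Finsupp.inf_apply]
    exact ⟨e01, e02, e03, e12, e13, e23, f0, f1, f2, f3⟩
  have hfm : ∀ a b : ℕ, a ≠ 0 → b ≠ 0 → ∀ p : ℕ, (a*b).factorization p = a.factorization p + b.factorization p :=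
    fun a b ha hb p => by rw [Nat.factorization_mul ha hb, Finsupp.add_apply]
  have hn0eq : n0 = z01 * z02 * z03 * (t1 * t2 * t3) := by
    have hrnz : z01 * z02 * z03 * (t1 * t2 * t3) ≠ 0 :=
      mul_ne_zero (mul_ne_zero (mul_ne_zero hz01z hz02z) hz03z)
        (mul_ne_zero (mul_ne_zero ht1z ht2z) ht3z)
    refine Nat.factorization_inj hn0z hrnz ?_
    ext p
    by_cases pp : p.Prime
    · obtain ⟨e01, e02, e03, e12, e13, e23, f0, f1, f2, f3⟩ := hfact p pp
      rw [hfm _ _ (mul_ne_zero (mul_ne_zero hz01z hz02z) hz03z) (mul_ne_zero (mul_ne_zero ht1z ht2z) ht3z) p,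
        hfm _ _ (mul_ne_zero hz01z hz02z) hz03z p, hfm _ _ hz01z hz02z p,
        hfm _ _ (mul_ne_zero ht1z ht2z) ht3z p, hfm _ _ ht1z ht2z p,
        e01, e02, e03, f1, f2, f3]
      exact val_sum0 _ _ _ _ (hminf p pp) (hmaxf p pp)
    · rw [Nat.factorization_eq_zero_of_not_prime _ pp, Nat.factorization_eq_zero_of_not_prime _ pp]
  have hn1eq : n1 = z01 * z12 * z13 * (t0 * t2 * t3) := by
    have hrnz : z01 * z12 * z13 * (t0 * t2 * t3) ≠ 0 :=
      mul_ne_zero (mul_ne_zero (mul_ne_zero hz01z hz12z) hz13z)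
        (mul_ne_zero (mul_ne_zero ht0z ht2z) ht3z)
    refine Nat.factorization_inj hn1z hrnz ?_
    ext p
    by_cases pp : p.Prime
    · obtain ⟨e01, e02, e03, e12, e13, e23, f0, f1, f2, f3⟩ := hfact p pp
      rw [hfm _ _ (mul_ne_zero (mul_ne_zero hz01z hz12z) hz13z) (mul_ne_zero (mul_ne_zero ht0z ht2z) ht3z) p,
        hfm _ _ (mul_ne_zero hz01z hz12z) hz13z p, hfm _ _ hz01z hz12z p,
        hfm _ _ (mul_ne_zero ht0z ht2z) ht3z p, hfm _ _ ht0z ht2z p,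
        e01, e12, e13, f0, f2, f3]
      exact val_sum1 _ _ _ _ (hminf p pp) (hmaxf p pp)
    · rw [Nat.factorization_eq_zero_of_not_prime _ pp, Nat.factorization_eq_zero_of_not_prime _ pp]
  have hn2eq : n2 = z02 * z12 * z23 * (t0 * t1 * t3) := by
    have hrnz : z02 * z12 * z23 * (t0 * t1 * t3) ≠ 0 :=
      mul_ne_zero (mul_ne_zero (mul_ne_zero hz02z hz12z) hz23z)
        (mul_ne_zero (mul_ne_zero ht0z ht1z) ht3z)
    refine Nat.factorization_inj hn2z hrnz ?_
    ext p
    by_cases pp : p.Prime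
    · obtain ⟨e01, e02, e03, e12, e13, e23, f0, f1, f2, f3⟩ := hfact p pp
      rw [hfm _ _ (mul_ne_zero (mul_ne_zero hz02z hz12z) hz23z) (mul_ne_zero (mul_ne_zero ht0z ht1z) ht3z) p,
        hfm _ _ (mul_ne_zero hz02z hz12z) hz23z p, hfm _ _ hz02z hz12z p,
        hfm _ _ (mul_ne_zero ht0z ht1z) ht3z p, hfm _ _ ht0z ht1z p,
        e02, e12, e23, f0, f1, f3]
      exact val_sum2 _ _ _ _ (hminf p pp) (hmaxf p pp)
    · rw [Nat.factorization_eq_zero_of_not_prime _ pp, Nat.factorization_eq_zero_of_not_prime _ pp]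
  have hn3eq : n3 = z03 * z13 * z23 * (t0 * t1 * t2) := by
    have hrnz : z03 * z13 * z23 * (t0 * t1 * t2) ≠ 0 :=
      mul_ne_zero (mul_ne_zero (mul_ne_zero hz03z hz13z) hz23z)
        (mul_ne_zero (mul_ne_zero ht0z ht1z) ht2z)
    refine Nat.factorization_inj hn3z hrnz ?_
    ext p
    by_cases pp : p.Prime
    · obtain ⟨e01, e02, e03, e12, e13, e23, f0, f1, f2, f3⟩ := hfact p pp
      rw [hfm _ _ (mul_ne_zero (mul_ne_zero hz03z hz13z) hz23z) (mul_ne_zero (mul_ne_zero ht0z ht1z) ht2z) p,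
        hfm _ _ (mul_ne_zero hz03z hz13z) hz23z p, hfm _ _ hz03z hz13z p,
        hfm _ _ (mul_ne_zero ht0z ht1z) ht2z p, hfm _ _ ht0z ht1z p,
        e03, e13, e23, f0, f1, f2]
      exact val_sum3 _ _ _ _ (hminf p pp) (hmaxf p pp)
    · rw [Nat.factorization_eq_zero_of_not_prime _ pp, Nat.factorization_eq_zero_of_not_prime _ pp]
  have copz_01_02 : Nat.Coprime z01 z02 := by
    apply coprime_of_prime
    intro p pp h1 h2
    obtain ⟨e01, e02, e03, e12, e13, e23, f0, f1, f2, f3⟩ := hfact p pp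
    have v1 := pp.factorization_pos_of_dvd hz01z h1
    have v2 := pp.factorization_pos_of_dvd hz02z h2
    rw [e01, f2, f3] at v1
    rw [e02, f1, f3] at v2
    rcases val_pair_01_02 (n0.factorization p) (n1.factorization p) (n2.factorization p) (n3.factorization p) (hminf p pp) (hmaxf p pp) with h | h
    · rw [h] at v1; exact absurd v1 (lt_irrefl 0)
    · rw [h] at v2; exact absurd v2 (lt_irrefl 0)
  have copz_01_03 : Nat.Coprime z01 z03 := by
    apply coprime_of_prime
    intro p pp h1 h2
    obtain ⟨e01, e02, e03, e12, e13, e23, f0, f1, f2, f3⟩ := hfact p pp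
    have v1 := pp.factorization_pos_of_dvd hz01z h1
    have v2 := pp.factorization_pos_of_dvd hz03z h2
    rw [e01, f2, f3] at v1
    rw [e03, f1, f2] at v2
    rcases val_pair_01_03 (n0.factorization p) (n1.factorization p) (n2.factorization p) (n3.factorization p) (hminf p pp) (hmaxf p pp) with h | h
    · rw [h] at v1; exact absurd v1 (lt_irrefl 0)
    · rw [h] at v2; exact absurd v2 (lt_irrefl 0)
  have copz_01_12 : Nat.Coprime z01 z12 := by
    apply coprime_of_prime
    intro p pp h1 h2
    obtain ⟨e01, e02, e03, e12, e13, e23, f0, f1, f2, f3⟩ := hfact p pp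
    have v1 := pp.factorization_pos_of_dvd hz01z h1
    have v2 := pp.factorization_pos_of_dvd hz12z h2
    rw [e01, f2, f3] at v1
    rw [e12, f0, f3] at v2
    rcases val_pair_01_12 (n0.factorization p) (n1.factorization p) (n2.factorization p) (n3.factorization p) (hminf p pp) (hmaxf p pp) with h | h
    · rw [h] at v1; exact absurd v1 (lt_irrefl 0)
    · rw [h] at v2; exact absurd v2 (lt_irrefl 0)
  have copz_01_13 : Nat.Coprime z01 z13 := by
    apply coprime_of_prime
    intro p pp h1 h2
    obtain ⟨e01, e02, e03, e12, e13, e23, f0, f1, f2, f3⟩ := hfact p pp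
    have v1 := pp.factorization_pos_of_dvd hz01z h1
    have v2 := pp.factorization_pos_of_dvd hz13z h2
    rw [e01, f2, f3] at v1
    rw [e13, f0, f2] at v2
    rcases val_pair_01_13 (n0.factorization p) (n1.factorization p) (n2.factorization p) (n3.factorization p) (hminf p pp) (hmaxf p pp) with h | h
    · rw [h] at v1; exact absurd v1 (lt_irrefl 0)
    · rw [h] at v2; exact absurd v2 (lt_irrefl 0)
  have copz_02_03 : Nat.Coprime z02 z03 := by
    apply coprime_of_prime
    intro p pp h1 h2
    obtain ⟨e01, e02, e03, e12, e13, e23, f0, f1, f2, f3⟩ := hfact p pp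
    have v1 := pp.factorization_pos_of_dvd hz02z h1
    have v2 := pp.factorization_pos_of_dvd hz03z h2
    rw [e02, f1, f3] at v1
    rw [e03, f1, f2] at v2
    rcases val_pair_02_03 (n0.factorization p) (n1.factorization p) (n2.factorization p) (n3.factorization p) (hminf p pp) (hmaxf p pp) with h | h
    · rw [h] at v1; exact absurd v1 (lt_irrefl 0)
    · rw [h] at v2; exact absurd v2 (lt_irrefl 0)
  have copz_02_12 : Nat.Coprime z02 z12 := by
    apply coprime_of_prime
    intro p pp h1 h2
    obtain ⟨e01, e02, e03, e12, e13, e23, f0, f1, f2, f3⟩ := hfact p pp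
    have v1 := pp.factorization_pos_of_dvd hz02z h1
    have v2 := pp.factorization_pos_of_dvd hz12z h2
    rw [e02, f1, f3] at v1
    rw [e12, f0, f3] at v2
    rcases val_pair_02_12 (n0.factorization p) (n1.factorization p) (n2.factorization p) (n3.factorization p) (hminf p pp) (hmaxf p pp) with h | h
    · rw [h] at v1; exact absurd v1 (lt_irrefl 0)
    · rw [h] at v2; exact absurd v2 (lt_irrefl 0)
  have copz_02_23 : Nat.Coprime z02 z23 := by
    apply coprime_of_prime
    intro p pp h1 h2
    obtain ⟨e01, e02, e03, e12, e13, e23, f0, f1, f2, f3⟩ := hfact p pp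
    have v1 := pp.factorization_pos_of_dvd hz02z h1
    have v2 := pp.factorization_pos_of_dvd hz23z h2
    rw [e02, f1, f3] at v1
    rw [e23, f0, f1] at v2
    rcases val_pair_02_23 (n0.factorization p) (n1.factorization p) (n2.factorization p) (n3.factorization p) (hminf p pp) (hmaxf p pp) with h | h
    · rw [h] at v1; exact absurd v1 (lt_irrefl 0)
    · rw [h] at v2; exact absurd v2 (lt_irrefl 0)
  have copz_03_13 : Nat.Coprime z03 z13 := by
    apply coprime_of_prime
    intro p pp h1 h2
    obtain ⟨e01, e02, e03, e12, e13, e23, f0, f1, f2, f3⟩ := hfact p pp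
    have v1 := pp.factorization_pos_of_dvd hz03z h1
    have v2 := pp.factorization_pos_of_dvd hz13z h2
    rw [e03, f1, f2] at v1
    rw [e13, f0, f2] at v2
    rcases val_pair_03_13 (n0.factorization p) (n1.factorization p) (n2.factorization p) (n3.factorization p) (hminf p pp) (hmaxf p pp) with h | h
    · rw [h] at v1; exact absurd v1 (lt_irrefl 0)
    · rw [h] at v2; exact absurd v2 (lt_irrefl 0)
  have copz_03_23 : Nat.Coprime z03 z23 := by
    apply coprime_of_prime
    intro p pp h1 h2
    obtain ⟨e01, e02, e03, e12, e13, e23, f0, f1, f2, f3⟩ := hfact p pp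
    have v1 := pp.factorization_pos_of_dvd hz03z h1
    have v2 := pp.factorization_pos_of_dvd hz23z h2
    rw [e03, f1, f2] at v1
    rw [e23, f0, f1] at v2
    rcases val_pair_03_23 (n0.factorization p) (n1.factorization p) (n2.factorization p) (n3.factorization p) (hminf p pp) (hmaxf p pp) with h | h
    · rw [h] at v1; exact absurd v1 (lt_irrefl 0)
    · rw [h] at v2; exact absurd v2 (lt_irrefl 0)
  have copz_12_13 : Nat.Coprime z12 z13 := by
    apply coprime_of_prime
    intro p pp h1 h2
    obtain ⟨e01, e02, e03, e12, e13, e23, f0, f1, f2, f3⟩ := hfact p pp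
    have v1 := pp.factorization_pos_of_dvd hz12z h1
    have v2 := pp.factorization_pos_of_dvd hz13z h2
    rw [e12, f0, f3] at v1
    rw [e13, f0, f2] at v2
    rcases val_pair_12_13 (n0.factorization p) (n1.factorization p) (n2.factorization p) (n3.factorization p) (hminf p pp) (hmaxf p pp) with h | h
    · rw [h] at v1; exact absurd v1 (lt_irrefl 0)
    · rw [h] at v2; exact absurd v2 (lt_irrefl 0)
  have copz_12_23 : Nat.Coprime z12 z23 := by
    apply coprime_of_prime
    intro p pp h1 h2
    obtain ⟨e01, e02, e03, e12, e13, e23, f0, f1, f2, f3⟩ := hfact p pp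
    have v1 := pp.factorization_pos_of_dvd hz12z h1
    have v2 := pp.factorization_pos_of_dvd hz23z h2
    rw [e12, f0, f3] at v1
    rw [e23, f0, f1] at v2
    rcases val_pair_12_23 (n0.factorization p) (n1.factorization p) (n2.factorization p) (n3.factorization p) (hminf p pp) (hmaxf p pp) with h | h
    · rw [h] at v1; exact absurd v1 (lt_irrefl 0)
    · rw [h] at v2; exact absurd v2 (lt_irrefl 0)
  have copz_13_23 : Nat.Coprime z13 z23 := by
    apply coprime_of_prime
    intro p pp h1 h2
    obtain ⟨e01, e02, e03, e12, e13, e23, f0, f1, f2, f3⟩ := hfact p pp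
    have v1 := pp.factorization_pos_of_dvd hz13z h1
    have v2 := pp.factorization_pos_of_dvd hz23z h2
    rw [e13, f0, f2] at v1
    rw [e23, f0, f1] at v2
    rcases val_pair_13_23 (n0.factorization p) (n1.factorization p) (n2.factorization p) (n3.factorization p) (hminf p pp) (hmaxf p pp) with h | h
    · rw [h] at v1; exact absurd v1 (lt_irrefl 0)
    · rw [h] at v2; exact absurd v2 (lt_irrefl 0)
  have copz_01_23 : Nat.Coprime z01 z23 := coprime_of_prime fun p pp h1 h2 =>
    hall p pp (h1.trans hz01n0) (h1.trans hz01n1) (h2.trans hz23n2) (h2.trans hz23n3)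
  have copz_02_13 : Nat.Coprime z02 z13 := coprime_of_prime fun p pp h1 h2 =>
    hall p pp (h1.trans hz02n0) (h2.trans hz13n1) (h1.trans hz02n2) (h2.trans hz13n3)
  have copz_03_12 : Nat.Coprime z03 z12 := coprime_of_prime fun p pp h1 h2 =>
    hall p pp (h1.trans hz03n0) (h2.trans hz12n1) (h2.trans hz12n2) (h1.trans hz03n3)
  have copt0z01 : Nat.Coprime t0 z01 := cop_t0_n0.coprime_dvd_right hz01n0
  have copt0z02 : Nat.Coprime t0 z02 := cop_t0_n0.coprime_dvd_right hz02n0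
  have copt0z03 : Nat.Coprime t0 z03 := cop_t0_n0.coprime_dvd_right hz03n0
  have copt1z01 : Nat.Coprime t1 z01 := cop_t1_n1.coprime_dvd_right hz01n1
  have copt1z12 : Nat.Coprime t1 z12 := cop_t1_n1.coprime_dvd_right hz12n1
  have copt1z13 : Nat.Coprime t1 z13 := cop_t1_n1.coprime_dvd_right hz13n1
  have copt2z02 : Nat.Coprime t2 z02 := cop_t2_n2.coprime_dvd_right hz02n2
  have copt2z12 : Nat.Coprime t2 z12 := cop_t2_n2.coprime_dvd_right hz12n2
  have copt2z23 : Nat.Coprime t2 z23 := cop_t2_n2.coprime_dvd_right hz23n2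
  have copt3z03 : Nat.Coprime t3 z03 := cop_t3_n3.coprime_dvd_right hz03n3
  have copt3z13 : Nat.Coprime t3 z13 := cop_t3_n3.coprime_dvd_right hz13n3
  have copt3z23 : Nat.Coprime t3 z23 := cop_t3_n3.coprime_dvd_right hz23n3
  have hsx : ∀ i : Fin 4, x i ≠ 0 → ∃ s : ℤ, (s = 1 ∨ s = -1) ∧ x i = s * ((x i).natAbs : ℤ) := by
    intro i hi
    refine ⟨if 0 < x i then 1 else -1, by split <;> simp, ?_⟩
    split <;> rename_i h <;> omega
  obtain ⟨s0, hs0, hx0s⟩ := hsx 0 hx0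
  rw [← hn0d] at hx0s
  obtain ⟨s1, hs1, hx1s⟩ := hsx 1 hx1
  rw [← hn1d] at hx1s
  obtain ⟨s2, hs2, hx2s⟩ := hsx 2 hx2
  rw [← hn2d] at hx2s
  obtain ⟨s3, hs3, hx3s⟩ := hsx 3 hx3
  rw [← hn3d] at hx3s
  have epack : ∃ E0 E1 E2 E3 : ℤ, E0.natAbs = t0 ∧ E1.natAbs = t1 ∧ E2.natAbs = t2 ∧ E3.natAbs = t3 ∧
      x 0 = (z01:ℤ) * (z02:ℤ) * (z03:ℤ) * (E1*E2*E3) ∧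
      x 1 = (z01:ℤ) * (z12:ℤ) * (z13:ℤ) * (E0*E2*E3) ∧
      x 2 = (z02:ℤ) * (z12:ℤ) * (z23:ℤ) * (E0*E1*E3) ∧
      x 3 = (z03:ℤ) * (z13:ℤ) * (z23:ℤ) * (E0*E1*E2) := by
    refine ⟨s0*s1*s2*s3*s0*(t0:ℤ), s0*s1*s2*s3*s1*(t1:ℤ), s0*s1*s2*s3*s2*(t2:ℤ), s0*s1*s2*s3*s3*(t3:ℤ),
      ?_, ?_, ?_, ?_, ?_, ?_, ?_, ?_⟩ <;>
    rcases hs0 with rfl|rfl <;> rcases hs1 with rfl|rfl <;> rcases hs2 with rfl|rfl <;> rcases hs3 with rfl|rfl <;>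
    first
      | (simp [Int.natAbs_mul]; done)
      | (rw [hx0s, hn0eq]; push_cast; ring)
      | (rw [hx1s, hn1eq]; push_cast; ring)
      | (rw [hx2s, hn2eq]; push_cast; ring)
      | (rw [hx3s, hn3eq]; push_cast; ring)
  obtain ⟨E0, E1, E2, E3, hna0, hna1, hna2, hna3, hxe0, hxe1, hxe2, hxe3⟩ := epack
  have hE0z : E0 ≠ 0 := fun h => ht0z (by rw [← hna0, h]; rfl)
  have hE1z : E1 ≠ 0 := fun h => ht1z (by rw [← hna1, h]; rfl)
  have hE2z : E2 ≠ 0 := fun h => ht2z (by rw [← hna2, h]; rfl)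
  have hE3z : E3 ≠ 0 := fun h => ht3z (by rw [← hna3, h]; rfl)
  have hLmain : (z12:ℤ)*(z13:ℤ)*(z23:ℤ)*E0 + (z02:ℤ)*(z03:ℤ)*(z23:ℤ)*E1 +
      (z01:ℤ)*(z03:ℤ)*(z13:ℤ)*E2 + (z01:ℤ)*(z02:ℤ)*(z12:ℤ)*E3 = 0 := by
    have hI : ((z12:ℤ)*(z13:ℤ)*(z23:ℤ)*E0 + (z02:ℤ)*(z03:ℤ)*(z23:ℤ)*E1 +
        (z01:ℤ)*(z03:ℤ)*(z13:ℤ)*E2 + (z01:ℤ)*(z02:ℤ)*(z12:ℤ)*E3) * (x 0 * x 1 * x 2 * x 3)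
        = ((z01:ℤ)*(z02:ℤ)*(z03:ℤ)*(z12:ℤ)*(z13:ℤ)*(z23:ℤ)*(E0*E1*E2*E3)) *
          (x 1 * x 2 * x 3 + x 0 * x 2 * x 3 + x 0 * x 1 * x 3 + x 0 * x 1 * x 2) := by
      rw [hxe0, hxe1, hxe2, hxe3]; ring
    rw [heq, mul_zero] at hI
    exact (mul_eq_zero.mp hI).resolve_right hprod
  have hKz : ((z01:ℤ)*(z02:ℤ)*(z03:ℤ)*(z12:ℤ)*(z13:ℤ)*(z23:ℤ)*(E0*E1*E2*E3)) ≠ 0 := by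
    have c : ∀ m : ℕ, m ≠ 0 → ((m:ℤ)) ≠ 0 := fun m hm => Int.natCast_ne_zero.mpr hm
    exact mul_ne_zero (mul_ne_zero (mul_ne_zero (mul_ne_zero (mul_ne_zero (mul_ne_zero (c _ hz01z) (c _ hz02z)) (c _ hz03z)) (c _ hz12z)) (c _ hz13z)) (c _ hz23z))
      (mul_ne_zero (mul_ne_zero (mul_ne_zero hE0z hE1z) hE2z) hE3z)
  have hB1 : (z12:ℤ)*(z13:ℤ)*(z23:ℤ)*E0 + (z02:ℤ)*(z03:ℤ)*(z23:ℤ)*E1 ≠ 0 := by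
    intro h
    have hI : ((z12:ℤ)*(z13:ℤ)*(z23:ℤ)*E0 + (z02:ℤ)*(z03:ℤ)*(z23:ℤ)*E1) * (x 0 * x 1)
        = ((z01:ℤ)*(z02:ℤ)*(z03:ℤ)*(z12:ℤ)*(z13:ℤ)*(z23:ℤ)*(E0*E1*E2*E3)) * (x 0 + x 1) := by
      rw [hxe0, hxe1]; ring
    rw [h, zero_mul] at hI
    exact (hlines 0 1 (by decide)) ((mul_eq_zero.mp hI.symm).resolve_left hKz)
  have hB2 : (z12:ℤ)*(z13:ℤ)*(z23:ℤ)*E0 + (z01:ℤ)*(z03:ℤ)*(z13:ℤ)*E2 ≠ 0 := by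
    intro h
    have hI : ((z12:ℤ)*(z13:ℤ)*(z23:ℤ)*E0 + (z01:ℤ)*(z03:ℤ)*(z13:ℤ)*E2) * (x 0 * x 2)
        = ((z01:ℤ)*(z02:ℤ)*(z03:ℤ)*(z12:ℤ)*(z13:ℤ)*(z23:ℤ)*(E0*E1*E2*E3)) * (x 0 + x 2) := by
      rw [hxe0, hxe2]; ring
    rw [h, zero_mul] at hI
    exact (hlines 0 2 (by decide)) ((mul_eq_zero.mp hI.symm).resolve_left hKz)
  have hB3 : (z12:ℤ)*(z13:ℤ)*(z23:ℤ)*E0 + (z01:ℤ)*(z02:ℤ)*(z12:ℤ)*E3 ≠ 0 := by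
    intro h
    have hI : ((z12:ℤ)*(z13:ℤ)*(z23:ℤ)*E0 + (z01:ℤ)*(z02:ℤ)*(z12:ℤ)*E3) * (x 0 * x 3)
        = ((z01:ℤ)*(z02:ℤ)*(z03:ℤ)*(z12:ℤ)*(z13:ℤ)*(z23:ℤ)*(E0*E1*E2*E3)) * (x 0 + x 3) := by
      rw [hxe0, hxe3]; ring
    rw [h, zero_mul] at hI
    exact (hlines 0 3 (by decide)) ((mul_eq_zero.mp hI.symm).resolve_left hKz)
  have gy01 : Int.gcd E0 E1 = 1 := by
    show Nat.gcd E0.natAbs E1.natAbs = 1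
    rw [hna0, hna1]; exact cop_t0_t1
  have gy10 : Int.gcd E1 E0 = 1 := by rw [Int.gcd_comm]; exact gy01
  have gy02 : Int.gcd E0 E2 = 1 := by
    show Nat.gcd E0.natAbs E2.natAbs = 1
    rw [hna0, hna2]; exact cop_t0_t2
  have gy20 : Int.gcd E2 E0 = 1 := by rw [Int.gcd_comm]; exact gy02
  have gy03 : Int.gcd E0 E3 = 1 := by
    show Nat.gcd E0.natAbs E3.natAbs = 1
    rw [hna0, hna3]; exact cop_t0_t3
  have gy30 : Int.gcd E3 E0 = 1 := by rw [Int.gcd_comm]; exact gy03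
  have gy12 : Int.gcd E1 E2 = 1 := by
    show Nat.gcd E1.natAbs E2.natAbs = 1
    rw [hna1, hna2]; exact cop_t1_t2
  have gy21 : Int.gcd E2 E1 = 1 := by rw [Int.gcd_comm]; exact gy12
  have gy13 : Int.gcd E1 E3 = 1 := by
    show Nat.gcd E1.natAbs E3.natAbs = 1
    rw [hna1, hna3]; exact cop_t1_t3
  have gy31 : Int.gcd E3 E1 = 1 := by rw [Int.gcd_comm]; exact gy13
  have gy23 : Int.gcd E2 E3 = 1 := by
    show Nat.gcd E2.natAbs E3.natAbs = 1
    rw [hna2, hna3]; exact cop_t2_t3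
  have gy32 : Int.gcd E3 E2 = 1 := by rw [Int.gcd_comm]; exact gy23
  have gz0_01 : Int.gcd E0 ((z01:ℕ):ℤ) = 1 := by
    show Nat.gcd E0.natAbs ((z01:ℕ):ℤ).natAbs = 1
    rw [hna0, Int.natAbs_natCast]; exact copt0z01
  have gz0_02 : Int.gcd E0 ((z02:ℕ):ℤ) = 1 := by
    show Nat.gcd E0.natAbs ((z02:ℕ):ℤ).natAbs = 1
    rw [hna0, Int.natAbs_natCast]; exact copt0z02
  have gz0_03 : Int.gcd E0 ((z03:ℕ):ℤ) = 1 := by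
    show Nat.gcd E0.natAbs ((z03:ℕ):ℤ).natAbs = 1
    rw [hna0, Int.natAbs_natCast]; exact copt0z03
  have gz1_01 : Int.gcd E1 ((z01:ℕ):ℤ) = 1 := by
    show Nat.gcd E1.natAbs ((z01:ℕ):ℤ).natAbs = 1
    rw [hna1, Int.natAbs_natCast]; exact copt1z01
  have gz1_12 : Int.gcd E1 ((z12:ℕ):ℤ) = 1 := by
    show Nat.gcd E1.natAbs ((z12:ℕ):ℤ).natAbs = 1
    rw [hna1, Int.natAbs_natCast]; exact copt1z12
  have gz1_13 : Int.gcd E1 ((z13:ℕ):ℤ) = 1 := by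
    show Nat.gcd E1.natAbs ((z13:ℕ):ℤ).natAbs = 1
    rw [hna1, Int.natAbs_natCast]; exact copt1z13
  have gz2_02 : Int.gcd E2 ((z02:ℕ):ℤ) = 1 := by
    show Nat.gcd E2.natAbs ((z02:ℕ):ℤ).natAbs = 1
    rw [hna2, Int.natAbs_natCast]; exact copt2z02
  have gz2_12 : Int.gcd E2 ((z12:ℕ):ℤ) = 1 := by
    show Nat.gcd E2.natAbs ((z12:ℕ):ℤ).natAbs = 1
    rw [hna2, Int.natAbs_natCast]; exact copt2z12
  have gz2_23 : Int.gcd E2 ((z23:ℕ):ℤ) = 1 := by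
    show Nat.gcd E2.natAbs ((z23:ℕ):ℤ).natAbs = 1
    rw [hna2, Int.natAbs_natCast]; exact copt2z23
  have gz3_03 : Int.gcd E3 ((z03:ℕ):ℤ) = 1 := by
    show Nat.gcd E3.natAbs ((z03:ℕ):ℤ).natAbs = 1
    rw [hna3, Int.natAbs_natCast]; exact copt3z03
  have gz3_13 : Int.gcd E3 ((z13:ℕ):ℤ) = 1 := by
    show Nat.gcd E3.natAbs ((z13:ℕ):ℤ).natAbs = 1
    rw [hna3, Int.natAbs_natCast]; exact copt3z13
  have gz3_23 : Int.gcd E3 ((z23:ℕ):ℤ) = 1 := by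
    show Nat.gcd E3.natAbs ((z23:ℕ):ℤ).natAbs = 1
    rw [hna3, Int.natAbs_natCast]; exact copt3z23
  refine ⟨1, Or.inl rfl, ![E0, E1, E2, E3],
    ![![1, z01, z02, z03], ![z01, 1, z12, z13], ![z02, z12, 1, z23], ![z03, z13, z23, 1]],
    ⟨?_, ?_, ?_, ?_, ?_, ?_, ?_, ?_, ?_, ?_⟩, ?_⟩
  · intro i
    fin_cases i <;> first | exact hE0z | exact hE1z | exact hE2z | exact hE3z
  · intro i j hij
    fin_cases i <;> fin_cases j <;>
      first | exact absurd rfl hij | exact Nat.pos_of_ne_zero hz01z | exact Nat.pos_of_ne_zero hz02z | exact Nat.pos_of_ne_zero hz03z | exact Nat.pos_of_ne_zero hz12z | exact Nat.pos_of_ne_zero hz13z | exact Nat.pos_of_ne_zero hz23z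
  · intro i j
    fin_cases i <;> fin_cases j <;> rfl
  · intro i j hij
    fin_cases i <;> fin_cases j <;>
      first | exact absurd rfl hij | exact gy01 | exact gy02 | exact gy03 | exact gy12 | exact gy13 | exact gy23 | exact gy10 | exact gy20 | exact gy30 | exact gy21 | exact gy31 | exact gy32
  · intro i j hij
    fin_cases i <;> fin_cases j <;>
      first | exact absurd rfl hij | exact gz0_01 | exact gz0_02 | exact gz0_03 | exact gz1_01 | exact gz1_12 | exact gz1_13 | exact gz2_02 | exact gz2_12 | exact gz2_23 | exact gz3_03 | exact gz3_13 | exact gz3_23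
  · intro a b c d hab hcd hne
    fin_cases a <;> fin_cases b <;> fin_cases c <;> fin_cases d
    exacts [absurd rfl hab,
      absurd rfl hab,
      absurd rfl hab,
      absurd rfl hab,
      absurd rfl hab,
      absurd rfl hab,
      absurd rfl hab,
      absurd rfl hab,
      absurd rfl hab,
      absurd rfl hab,
      absurd rfl hab,
      absurd rfl hab,
      absurd rfl hab,
      absurd rfl hab,
      absurd rfl hab,
      absurd rfl hab,
      absurd rfl hcd,
      absurd (by decide) hne,
      copz_01_02,
      copz_01_03,
      absurd (by decide) hne,
      absurd rfl hcd,
      copz_01_12,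
      copz_01_13,
      copz_01_02,
      copz_01_12,
      absurd rfl hcd,
      copz_01_23,
      copz_01_03,
      copz_01_13,
      copz_01_23,
      absurd rfl hcd,
      absurd rfl hcd,
      (copz_01_02).symm,
      absurd (by decide) hne,
      copz_02_03,
      (copz_01_02).symm,
      absurd rfl hcd,
      copz_02_12,
      copz_02_13,
      absurd (by decide) hne,
      copz_02_12,
      absurd rfl hcd,
      copz_02_23,
      copz_02_03,
      copz_02_13,
      copz_02_23,
      absurd rfl hcd,
      absurd rfl hcd,
      (copz_01_03).symm,
      (copz_02_03).symm,
      absurd (by decide) hne,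
      (copz_01_03).symm,
      absurd rfl hcd,
      copz_03_12,
      copz_03_13,
      (copz_02_03).symm,
      copz_03_12,
      absurd rfl hcd,
      copz_03_23,
      absurd (by decide) hne,
      copz_03_13,
      copz_03_23,
      absurd rfl hcd,
      absurd rfl hcd,
      absurd (by decide) hne,
      copz_01_02,
      copz_01_03,
      absurd (by decide) hne,
      absurd rfl hcd,
      copz_01_12,
      copz_01_13,
      copz_01_02,
      copz_01_12,
      absurd rfl hcd,
      copz_01_23,
      copz_01_03,
      copz_01_13,
      copz_01_23,
      absurd rfl hcd,
      absurd rfl hab,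
      absurd rfl hab,
      absurd rfl hab,
      absurd rfl hab,
      absurd rfl hab,
      absurd rfl hab,
      absurd rfl hab,
      absurd rfl hab,
      absurd rfl hab,
      absurd rfl hab,
      absurd rfl hab,
      absurd rfl hab,
      absurd rfl hab,
      absurd rfl hab,
      absurd rfl hab,
      absurd rfl hab,
      absurd rfl hcd,
      (copz_01_12).symm,
      (copz_02_12).symm,
      (copz_03_12).symm,
      (copz_01_12).symm,
      absurd rfl hcd,
      absurd (by decide) hne,
      copz_12_13,
      (copz_02_12).symm,
      absurd (by decide) hne,
      absurd rfl hcd,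
      copz_12_23,
      (copz_03_12).symm,
      copz_12_13,
      copz_12_23,
      absurd rfl hcd,
      absurd rfl hcd,
      (copz_01_13).symm,
      (copz_02_13).symm,
      (copz_03_13).symm,
      (copz_01_13).symm,
      absurd rfl hcd,
      (copz_12_13).symm,
      absurd (by decide) hne,
      (copz_02_13).symm,
      (copz_12_13).symm,
      absurd rfl hcd,
      copz_13_23,
      (copz_03_13).symm,
      absurd (by decide) hne,
      copz_13_23,
      absurd rfl hcd,
      absurd rfl hcd,
      (copz_01_02).symm,
      absurd (by decide) hne,
      copz_02_03,
      (copz_01_02).symm,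
      absurd rfl hcd,
      copz_02_12,
      copz_02_13,
      absurd (by decide) hne,
      copz_02_12,
      absurd rfl hcd,
      copz_02_23,
      copz_02_03,
      copz_02_13,
      copz_02_23,
      absurd rfl hcd,
      absurd rfl hcd,
      (copz_01_12).symm,
      (copz_02_12).symm,
      (copz_03_12).symm,
      (copz_01_12).symm,
      absurd rfl hcd,
      absurd (by decide) hne,
      copz_12_13,
      (copz_02_12).symm,
      absurd (by decide) hne,
      absurd rfl hcd,
      copz_12_23,
      (copz_03_12).symm,
      copz_12_13,
      copz_12_23,
      absurd rfl hcd,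
      absurd rfl hab,
      absurd rfl hab,
      absurd rfl hab,
      absurd rfl hab,
      absurd rfl hab,
      absurd rfl hab,
      absurd rfl hab,
      absurd rfl hab,
      absurd rfl hab,
      absurd rfl hab,
      absurd rfl hab,
      absurd rfl hab,
      absurd rfl hab,
      absurd rfl hab,
      absurd rfl hab,
      absurd rfl hab,
      absurd rfl hcd,
      (copz_01_23).symm,
      (copz_02_23).symm,
      (copz_03_23).symm,
      (copz_01_23).symm,
      absurd rfl hcd,
      (copz_12_23).symm,
      (copz_13_23).symm,
      (copz_02_23).symm,
      (copz_12_23).symm,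
      absurd rfl hcd,
      absurd (by decide) hne,
      (copz_03_23).symm,
      (copz_13_23).symm,
      absurd (by decide) hne,
      absurd rfl hcd,
      absurd rfl hcd,
      (copz_01_03).symm,
      (copz_02_03).symm,
      absurd (by decide) hne,
      (copz_01_03).symm,
      absurd rfl hcd,
      copz_03_12,
      copz_03_13,
      (copz_02_03).symm,
      copz_03_12,
      absurd rfl hcd,
      copz_03_23,
      absurd (by decide) hne,
      copz_03_13,
      copz_03_23,
      absurd rfl hcd,
      absurd rfl hcd,
      (copz_01_13).symm,
      (copz_02_13).symm,
      (copz_03_13).symm,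
      (copz_01_13).symm,
      absurd rfl hcd,
      (copz_12_13).symm,
      absurd (by decide) hne,
      (copz_02_13).symm,
      (copz_12_13).symm,
      absurd rfl hcd,
      copz_13_23,
      (copz_03_13).symm,
      absurd (by decide) hne,
      copz_13_23,
      absurd rfl hcd,
      absurd rfl hcd,
      (copz_01_23).symm,
      (copz_02_23).symm,
      (copz_03_23).symm,
      (copz_01_23).symm,
      absurd rfl hcd,
      (copz_12_23).symm,
      (copz_13_23).symm,
      (copz_02_23).symm,
      (copz_12_23).symm,
      absurd rfl hcd,
      absurd (by decide) hne,
      (copz_03_23).symm,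
      (copz_13_23).symm,
      absurd (by decide) hne,
      absurd rfl hcd,
      absurd rfl hab,
      absurd rfl hab,
      absurd rfl hab,
      absurd rfl hab,
      absurd rfl hab,
      absurd rfl hab,
      absurd rfl hab,
      absurd rfl hab,
      absurd rfl hab,
      absurd rfl hab,
      absurd rfl hab,
      absurd rfl hab,
      absurd rfl hab,
      absurd rfl hab,
      absurd rfl hab,
      absurd rfl hab]
  · exact hLmain
  · exact hB1
  · exact hB2
  · exact hB3
  · intro i
    fin_cases i
    · rw [one_mul]; exact hxe0
    · rw [one_mul]; exact hxe1
    · rw [one_mul]; exact hxe2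
    · rw [one_mul]; exact hxe3

lemma torsor_converse (y : Fin 4 → ℤ) (z : Fin 4 → Fin 4 → ℕ) (hT : TorsorConds y z) :
    CayleyPoint (torsorPoint y z) := by
  obtain ⟨hy, hzpos, hzsym, hyy, hyz, hzz, hL, hA1, hA2, hA3⟩ := hT
  have e0 : torsorPoint y z 0 = (z 0 1 : ℤ) * (z 0 2 : ℤ) * (z 0 3 : ℤ) * (y 1 * y 2 * y 3) := rfl
  have e1 : torsorPoint y z 1 = (z 0 1 : ℤ) * (z 1 2 : ℤ) * (z 1 3 : ℤ) * (y 0 * y 2 * y 3) := rfl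
  have e2 : torsorPoint y z 2 = (z 0 2 : ℤ) * (z 1 2 : ℤ) * (z 2 3 : ℤ) * (y 0 * y 1 * y 3) := rfl
  have e3 : torsorPoint y z 3 = (z 0 3 : ℤ) * (z 1 3 : ℤ) * (z 2 3 : ℤ) * (y 0 * y 1 * y 2) := rfl
  have hZ : ∀ i j, i ≠ j → ((z i j : ℤ)) ≠ 0 := fun i j h => Int.natCast_ne_zero.mpr (hzpos i j h).ne'
  have hX0 : torsorPoint y z 0 ≠ 0 := by
    rw [e0]
    exact mul_ne_zero (mul_ne_zero (mul_ne_zero (hZ 0 1 (by decide)) (hZ 0 2 (by decide))) (hZ 0 3 (by decide)))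
      (mul_ne_zero (mul_ne_zero (hy 1) (hy 2)) (hy 3))
  have hX1 : torsorPoint y z 1 ≠ 0 := by
    rw [e1]
    exact mul_ne_zero (mul_ne_zero (mul_ne_zero (hZ 0 1 (by decide)) (hZ 1 2 (by decide))) (hZ 1 3 (by decide)))
      (mul_ne_zero (mul_ne_zero (hy 0) (hy 2)) (hy 3))
  have hX2 : torsorPoint y z 2 ≠ 0 := by
    rw [e2]
    exact mul_ne_zero (mul_ne_zero (mul_ne_zero (hZ 0 2 (by decide)) (hZ 1 2 (by decide))) (hZ 2 3 (by decide)))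
      (mul_ne_zero (mul_ne_zero (hy 0) (hy 1)) (hy 3))
  have hX3 : torsorPoint y z 3 ≠ 0 := by
    rw [e3]
    exact mul_ne_zero (mul_ne_zero (mul_ne_zero (hZ 0 3 (by decide)) (hZ 1 3 (by decide))) (hZ 2 3 (by decide)))
      (mul_ne_zero (mul_ne_zero (hy 0) (hy 1)) (hy 2))
  have h01 : torsorPoint y z 0 + torsorPoint y z 1 ≠ 0 := by
    intro h
    rw [e0, e1, show (z 0 1:ℤ)*(z 0 2:ℤ)*(z 0 3:ℤ)*(y 1*y 2*y 3) + (z 0 1:ℤ)*(z 1 2:ℤ)*(z 1 3:ℤ)*(y 0*y 2*y 3)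
      = ((z 0 1:ℤ)*(y 2*y 3)) * ((z 1 2:ℤ)*(z 1 3:ℤ)*y 0 + (z 0 2:ℤ)*(z 0 3:ℤ)*y 1) from by ring] at h
    rcases mul_eq_zero.mp h with h' | h'
    · exact (mul_ne_zero (hZ 0 1 (by decide)) (mul_ne_zero (hy 2) (hy 3))) h'
    · exact hA1 (by linear_combination (z 2 3 : ℤ) * h')
  have h02 : torsorPoint y z 0 + torsorPoint y z 2 ≠ 0 := by
    intro h
    rw [e0, e2, show (z 0 1:ℤ)*(z 0 2:ℤ)*(z 0 3:ℤ)*(y 1*y 2*y 3) + (z 0 2:ℤ)*(z 1 2:ℤ)*(z 2 3:ℤ)*(y 0*y 1*y 3)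
      = ((z 0 2:ℤ)*(y 1*y 3)) * ((z 1 2:ℤ)*(z 2 3:ℤ)*y 0 + (z 0 1:ℤ)*(z 0 3:ℤ)*y 2) from by ring] at h
    rcases mul_eq_zero.mp h with h' | h'
    · exact (mul_ne_zero (hZ 0 2 (by decide)) (mul_ne_zero (hy 1) (hy 3))) h'
    · exact hA2 (by linear_combination (z 1 3 : ℤ) * h')
  have h03 : torsorPoint y z 0 + torsorPoint y z 3 ≠ 0 := by
    intro h
    rw [e0, e3, show (z 0 1:ℤ)*(z 0 2:ℤ)*(z 0 3:ℤ)*(y 1*y 2*y 3) + (z 0 3:ℤ)*(z 1 3:ℤ)*(z 2 3:ℤ)*(y 0*y 1*y 2)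
      = ((z 0 3:ℤ)*(y 1*y 2)) * ((z 1 3:ℤ)*(z 2 3:ℤ)*y 0 + (z 0 1:ℤ)*(z 0 2:ℤ)*y 3) from by ring] at h
    rcases mul_eq_zero.mp h with h' | h'
    · exact (mul_ne_zero (hZ 0 3 (by decide)) (mul_ne_zero (hy 1) (hy 2))) h'
    · exact hA3 (by linear_combination (z 1 2 : ℤ) * h')
  have h12 : torsorPoint y z 1 + torsorPoint y z 2 ≠ 0 := by
    intro h
    rw [e1, e2, show (z 0 1:ℤ)*(z 1 2:ℤ)*(z 1 3:ℤ)*(y 0*y 2*y 3) + (z 0 2:ℤ)*(z 1 2:ℤ)*(z 2 3:ℤ)*(y 0*y 1*y 3)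
      = ((z 1 2:ℤ)*(y 0*y 3)) * ((z 0 2:ℤ)*(z 2 3:ℤ)*y 1 + (z 0 1:ℤ)*(z 1 3:ℤ)*y 2) from by ring] at h
    rcases mul_eq_zero.mp h with h' | h'
    · exact (mul_ne_zero (hZ 1 2 (by decide)) (mul_ne_zero (hy 0) (hy 3))) h'
    · exact hA3 (by linear_combination hL - (z 0 3 : ℤ) * h')
  have h13 : torsorPoint y z 1 + torsorPoint y z 3 ≠ 0 := by
    intro h
    rw [e1, e3, show (z 0 1:ℤ)*(z 1 2:ℤ)*(z 1 3:ℤ)*(y 0*y 2*y 3) + (z 0 3:ℤ)*(z 1 3:ℤ)*(z 2 3:ℤ)*(y 0*y 1*y 2)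
      = ((z 1 3:ℤ)*(y 0*y 2)) * ((z 0 3:ℤ)*(z 2 3:ℤ)*y 1 + (z 0 1:ℤ)*(z 1 2:ℤ)*y 3) from by ring] at h
    rcases mul_eq_zero.mp h with h' | h'
    · exact (mul_ne_zero (hZ 1 3 (by decide)) (mul_ne_zero (hy 0) (hy 2))) h'
    · exact hA2 (by linear_combination hL - (z 0 2 : ℤ) * h')
  have h23 : torsorPoint y z 2 + torsorPoint y z 3 ≠ 0 := by
    intro h
    rw [e2, e3, show (z 0 2:ℤ)*(z 1 2:ℤ)*(z 2 3:ℤ)*(y 0*y 1*y 3) + (z 0 3:ℤ)*(z 1 3:ℤ)*(z 2 3:ℤ)*(y 0*y 1*y 2)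
      = ((z 2 3:ℤ)*(y 0*y 1)) * ((z 0 3:ℤ)*(z 1 3:ℤ)*y 2 + (z 0 2:ℤ)*(z 1 2:ℤ)*y 3) from by ring] at h
    rcases mul_eq_zero.mp h with h' | h'
    · exact (mul_ne_zero (hZ 2 3 (by decide)) (mul_ne_zero (hy 0) (hy 1))) h'
    · exact hA1 (by linear_combination hL - (z 0 1 : ℤ) * h')
  have h10 : torsorPoint y z 1 + torsorPoint y z 0 ≠ 0 := fun h => h01 (by linarith)
  have h20 : torsorPoint y z 2 + torsorPoint y z 0 ≠ 0 := fun h => h02 (by linarith)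
  have h30 : torsorPoint y z 3 + torsorPoint y z 0 ≠ 0 := fun h => h03 (by linarith)
  have h21 : torsorPoint y z 2 + torsorPoint y z 1 ≠ 0 := fun h => h12 (by linarith)
  have h31 : torsorPoint y z 3 + torsorPoint y z 1 ≠ 0 := fun h => h13 (by linarith)
  have h32 : torsorPoint y z 3 + torsorPoint y z 2 ≠ 0 := fun h => h23 (by linarith)
  refine ⟨?_, ?_, ?_, ?_⟩
  · by_contra hg
    obtain ⟨p, pp, hpd⟩ := Nat.exists_prime_and_dvd hg
    have hd01 : p ∣ Int.gcd (torsorPoint y z 0) (torsorPoint y z 1) := hpd.trans (Nat.gcd_dvd_left _ _)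
    have hd23 : p ∣ Int.gcd (torsorPoint y z 2) (torsorPoint y z 3) := hpd.trans (Nat.gcd_dvd_right _ _)
    have hd0 : p ∣ (torsorPoint y z 0).natAbs := hd01.trans (Nat.gcd_dvd_left _ _)
    have hd1 : p ∣ (torsorPoint y z 1).natAbs := hd01.trans (Nat.gcd_dvd_right _ _)
    have hd2 : p ∣ (torsorPoint y z 2).natAbs := hd23.trans (Nat.gcd_dvd_left _ _)
    have hd3 : p ∣ (torsorPoint y z 3).natAbs := hd23.trans (Nat.gcd_dvd_right _ _)
    rw [e0] at hd0; rw [e1] at hd1; rw [e2] at hd2; rw [e3] at hd3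
    simp only [Int.natAbs_mul, Int.natAbs_natCast, Nat.Prime.dvd_mul pp] at hd0 hd1 hd2 hd3
    have K1 : ∀ i j, i ≠ j → p ∣ (y i).natAbs → p ∣ (y j).natAbs → False :=
      fun i j hij a b => prime_dvd_gcd_false pp (hyy i j hij) a b
    have K2 : ∀ i j, i ≠ j → p ∣ (y i).natAbs → p ∣ z i j → False :=
      fun i j hij a b => prime_dvd_gcd_false pp (hyz i j hij) a b
    have K3 : ∀ a b c d, a ≠ b → c ≠ d → ({a, b} : Finset (Fin 4)) ≠ ({c, d} : Finset (Fin 4)) →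
        p ∣ z a b → p ∣ z c d → False :=
      fun a b c d hab hcd hne pa pb => prime_dvd_gcd_false pp (hzz a b c d hab hcd hne) pa pb
    have hny0 : ¬ p ∣ (y 0).natAbs := by
      intro hp
      rcases hd0 with ((h|h)|h)|((h|h)|h)
      · exact K2 0 1 (by decide) hp h
      · exact K2 0 2 (by decide) hp h
      · exact K2 0 3 (by decide) hp h
      · exact K1 0 1 (by decide) hp h
      · exact K1 0 2 (by decide) hp h
      · exact K1 0 3 (by decide) hp h
    have hny1 : ¬ p ∣ (y 1).natAbs := by
      intro hp
      rcases hd1 with ((h|h)|h)|((h|h)|h)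
      · exact K2 1 0 (by decide) hp (by rw [hzsym 1 0]; exact h)
      · exact K2 1 2 (by decide) hp h
      · exact K2 1 3 (by decide) hp h
      · exact K1 1 0 (by decide) hp h
      · exact K1 1 2 (by decide) hp h
      · exact K1 1 3 (by decide) hp h
    have hny2 : ¬ p ∣ (y 2).natAbs := by
      intro hp
      rcases hd2 with ((h|h)|h)|((h|h)|h)
      · exact K2 2 0 (by decide) hp (by rw [hzsym 2 0]; exact h)
      · exact K2 2 1 (by decide) hp (by rw [hzsym 2 1]; exact h)
      · exact K2 2 3 (by decide) hp h
      · exact K1 2 0 (by decide) hp h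
      · exact K1 2 1 (by decide) hp h
      · exact K1 2 3 (by decide) hp h
    have hny3 : ¬ p ∣ (y 3).natAbs := by
      intro hp
      rcases hd3 with ((h|h)|h)|((h|h)|h)
      · exact K2 3 0 (by decide) hp (by rw [hzsym 3 0]; exact h)
      · exact K2 3 1 (by decide) hp (by rw [hzsym 3 1]; exact h)
      · exact K2 3 2 (by decide) hp (by rw [hzsym 3 2]; exact h)
      · exact K1 3 0 (by decide) hp h
      · exact K1 3 1 (by decide) hp h
      · exact K1 3 2 (by decide) hp h
    have m0 : p ∣ z 0 1 ∨ p ∣ z 0 2 ∨ p ∣ z 0 3 := by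
      rcases hd0 with ((h|h)|h)|((h|h)|h)
      exacts [Or.inl h, Or.inr (Or.inl h), Or.inr (Or.inr h),
        absurd h hny1, absurd h hny2, absurd h hny3]
    have m1 : p ∣ z 0 1 ∨ p ∣ z 1 2 ∨ p ∣ z 1 3 := by
      rcases hd1 with ((h|h)|h)|((h|h)|h)
      exacts [Or.inl h, Or.inr (Or.inl h), Or.inr (Or.inr h),
        absurd h hny0, absurd h hny2, absurd h hny3]
    have m2 : p ∣ z 0 2 ∨ p ∣ z 1 2 ∨ p ∣ z 2 3 := by
      rcases hd2 with ((h|h)|h)|((h|h)|h)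
      exacts [Or.inl h, Or.inr (Or.inl h), Or.inr (Or.inr h),
        absurd h hny0, absurd h hny1, absurd h hny3]
    rcases m0 with h|h|h
    · rcases m2 with h'|h'|h'
      · exact K3 0 1 0 2 (by decide) (by decide) (by decide) h h'
      · exact K3 0 1 1 2 (by decide) (by decide) (by decide) h h'
      · exact K3 0 1 2 3 (by decide) (by decide) (by decide) h h'
    · rcases m1 with h'|h'|h'
      · exact K3 0 2 0 1 (by decide) (by decide) (by decide) h h'
      · exact K3 0 2 1 2 (by decide) (by decide) (by decide) h h'
      · exact K3 0 2 1 3 (by decide) (by decide) (by decide) h h'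
    · rcases m1 with h'|h'|h'
      · exact K3 0 3 0 1 (by decide) (by decide) (by decide) h h'
      · exact K3 0 3 1 2 (by decide) (by decide) (by decide) h h'
      · exact K3 0 3 1 3 (by decide) (by decide) (by decide) h h'
  · rw [e0, e1, e2, e3]
    linear_combination ((z 0 1:ℤ)*(z 0 2:ℤ)*(z 0 3:ℤ)*(z 1 2:ℤ)*(z 1 3:ℤ)*(z 2 3:ℤ)*((y 0*y 1*y 2*y 3)^2)) * hL
  · exact mul_ne_zero (mul_ne_zero (mul_ne_zero hX0 hX1) hX2) hX3
  · intro i j hij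
    fin_cases i <;> fin_cases j <;>
      first
      | exact absurd rfl hij
      | exact h01 | exact h02 | exact h03 | exact h12 | exact h13 | exact h23
      | exact h10 | exact h20 | exact h30 | exact h21 | exact h31 | exact h32

/-- Lemma 3 (after Heath-Brown, Lemma 1): the universal torsor parametrization of primitive
integral points of `U₀` on Cayley's cubic surface. Every such point `x` satisfies
`ε • x = torsorPoint y z` for some sign `ε` and torsor variables satisfying the torsor
conditions, and conversely any torsor variables satisfying the conditions yield such a
point. -/
theorem universal_torsor_parametrization :
    (∀ x : Fin 4 → ℤ, CayleyPoint x →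
      ∃ ε : ℤ, (ε = 1 ∨ ε = -1) ∧ ∃ y : Fin 4 → ℤ, ∃ z : Fin 4 → Fin 4 → ℕ,
        TorsorConds y z ∧ ∀ i, ε * x i = torsorPoint y z i) ∧
    (∀ (y : Fin 4 → ℤ) (z : Fin 4 → Fin 4 → ℕ), TorsorConds y z →
      CayleyPoint (torsorPoint y z)) :=
  ⟨torsor_forward, torsor_converse⟩
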